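/- arXiv:1910.03231 — 9 statements merged into one kernel-verified Lean document; each statement's English description precedes it below -/
import Mathlib

section
/- Let f* be a binary classifier with error rates e*₊₁ := P(f*(X) = −1 | Y = +1) and e*₋₁ := P(f*(X) = +1 | Y = −1), where f*(X) is determined by X. Then P(f*(X) = +1, Ỹ = +1) − P(f*(X) = +1)·P(Ỹ = +1) = p(1−p)(1 − e₊₁ − e₋₁)(1 − e*₊₁ − e*₋₁), and likewise P(f*(X) = +1, Ỹ = −1) − P(f*(X) = +1)·P(Ỹ = −1) = −p(1−p)(1 − e₊₁ − e₋₁)(1 − e*₊₁ − e*₋₁). -/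
open MeasureTheory

/-!
Split every event along the value of the clean label `Y`. Conditional independence makes
`P(f* = 1, Ỹ = 1, Y = y)` the product of the conditional probabilities of `f* = 1` and `Ỹ = 1`
given `Y = y`, times `P(Y = y)`; expanding `P(f* = 1, Ỹ = 1) - P(f* = 1) P(Ỹ = 1)` over the two
values of `Y` then leaves `p (1 - p)` times the product of the two gaps
`P(· = 1 | Y = 1) - P(· = 1 | Y = -1)`, which are `1 - e*₊₁ - e*₋₁` and `1 - e₊₁ - e₋₁`.
For `Ỹ = -1` the sign flips because `{Ỹ = 1}` and `{Ỹ = -1}` are complementary.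
-/

section

variable {Ω : Type*} [MeasurableSpace Ω] {μ : Measure Ω} {Z : Ω → ℤ} {A B : Ω → Prop}

theorem toReal_measure_eq_and_one_add_and_neg_one [IsFiniteMeasure μ] (hZ : Measurable Z)
    (hZval : ∀ ω, Z ω = 1 ∨ Z ω = -1) (P : Ω → Prop) :
    (μ {ω | P ω}).toReal
      = (μ {ω | P ω ∧ Z ω = 1}).toReal + (μ {ω | P ω ∧ Z ω = -1}).toReal := by
  have hdiff : {ω | P ω ∧ Z ω = -1} = {ω | P ω} \ {ω | Z ω = 1} := by
    ext ω
    rcases hZval ω with h | h <;> simp [h]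
  rw [hdiff]
  exact (measureReal_inter_add_sdiff (s := {ω | P ω}) (hZ (measurableSet_singleton 1))).symm

theorem toReal_measure_neg_one_eq_one_sub [IsProbabilityMeasure μ] (hZ : Measurable Z)
    (hZval : ∀ ω, Z ω = 1 ∨ Z ω = -1) :
    (μ {ω | Z ω = -1}).toReal = 1 - (μ {ω | Z ω = 1}).toReal := by
  have h := toReal_measure_eq_and_one_add_and_neg_one (μ := μ) hZ hZval fun _ => True
  simp only [true_and, Set.ofPred_true, measure_univ, ENNReal.toReal_one] at h
  linarith

theorem toReal_measure_one_and_eq_one_sub_mul [IsFiniteMeasure μ] (hZ : Measurable Z)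
    (hZval : ∀ ω, Z ω = 1 ∨ Z ω = -1) (Q : Ω → Prop) {e : ℝ}
    (h : (μ {ω | Z ω = -1 ∧ Q ω}).toReal = e * (μ {ω | Q ω}).toReal) :
    (μ {ω | Z ω = 1 ∧ Q ω}).toReal = (1 - e) * (μ {ω | Q ω}).toReal := by
  have hsplit := toReal_measure_eq_and_one_add_and_neg_one (μ := μ) hZ hZval Q
  simp only [and_comm (a := Q _)] at hsplit
  linarith

theorem toReal_measure_and_neg_one_sub_mul [IsProbabilityMeasure μ] (hZ : Measurable Z)
    (hZval : ∀ ω, Z ω = 1 ∨ Z ω = -1) :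
    (μ {ω | A ω ∧ Z ω = -1}).toReal - (μ {ω | A ω}).toReal * (μ {ω | Z ω = -1}).toReal
      = -((μ {ω | A ω ∧ Z ω = 1}).toReal
          - (μ {ω | A ω}).toReal * (μ {ω | Z ω = 1}).toReal) := by
  rw [toReal_measure_neg_one_eq_one_sub hZ hZval,
    toReal_measure_eq_and_one_add_and_neg_one hZ hZval A]
  ring

theorem toReal_measure_and_and_eq_mul_mul [IsFiniteMeasure μ] {y : ℤ} {a b : ℝ}
    (hAB : (μ {ω | Z ω = y}).toReal * (μ {ω | A ω ∧ B ω ∧ Z ω = y}).toReal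
      = (μ {ω | A ω ∧ Z ω = y}).toReal * (μ {ω | B ω ∧ Z ω = y}).toReal)
    (hA : (μ {ω | A ω ∧ Z ω = y}).toReal = a * (μ {ω | Z ω = y}).toReal)
    (hB : (μ {ω | B ω ∧ Z ω = y}).toReal = b * (μ {ω | Z ω = y}).toReal) :
    (μ {ω | A ω ∧ B ω ∧ Z ω = y}).toReal = a * b * (μ {ω | Z ω = y}).toReal := by
  rcases eq_or_ne (μ {ω | Z ω = y}).toReal 0 with h0 | h0
  · have hle : (μ {ω | A ω ∧ B ω ∧ Z ω = y}).toReal ≤ (μ {ω | Z ω = y}).toReal :=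
      ENNReal.toReal_mono (measure_ne_top _ _) (measure_mono fun ω hω => hω.2.2)
    rw [h0, mul_zero]
    exact le_antisymm (h0 ▸ hle) ENNReal.toReal_nonneg
  · refine mul_left_cancel₀ h0 ?_
    rw [hAB, hA, hB]
    ring

theorem toReal_measure_and_sub_mul_eq_of_condIndep [IsProbabilityMeasure μ] (hZ : Measurable Z)
    (hZval : ∀ ω, Z ω = 1 ∨ Z ω = -1) {a₁ a₂ b₁ b₂ : ℝ}
    (hAB : ∀ y, (μ {ω | Z ω = y}).toReal * (μ {ω | A ω ∧ B ω ∧ Z ω = y}).toReal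
      = (μ {ω | A ω ∧ Z ω = y}).toReal * (μ {ω | B ω ∧ Z ω = y}).toReal)
    (hA₁ : (μ {ω | A ω ∧ Z ω = 1}).toReal = a₁ * (μ {ω | Z ω = 1}).toReal)
    (hA₂ : (μ {ω | A ω ∧ Z ω = -1}).toReal = a₂ * (μ {ω | Z ω = -1}).toReal)
    (hB₁ : (μ {ω | B ω ∧ Z ω = 1}).toReal = b₁ * (μ {ω | Z ω = 1}).toReal)
    (hB₂ : (μ {ω | B ω ∧ Z ω = -1}).toReal = b₂ * (μ {ω | Z ω = -1}).toReal) :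
    (μ {ω | A ω ∧ B ω}).toReal - (μ {ω | A ω}).toReal * (μ {ω | B ω}).toReal
      = (μ {ω | Z ω = 1}).toReal * (1 - (μ {ω | Z ω = 1}).toReal)
          * (a₁ - a₂) * (b₁ - b₂) := by
  have hAB₁ := toReal_measure_and_and_eq_mul_mul (hAB 1) hA₁ hB₁
  have hAB₂ := toReal_measure_and_and_eq_mul_mul (hAB (-1)) hA₂ hB₂
  have hsplitAB := toReal_measure_eq_and_one_add_and_neg_one (μ := μ) hZ hZval fun ω => A ω ∧ B ω
  simp only [and_assoc] at hsplitAB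
  rw [hsplitAB, hAB₁, hAB₂, toReal_measure_eq_and_one_add_and_neg_one hZ hZval A, hA₁, hA₂,
    toReal_measure_eq_and_one_add_and_neg_one hZ hZval B, hB₁, hB₂,
    toReal_measure_neg_one_eq_one_sub hZ hZval]
  ring

end

theorem peer_loss_stmt0_general
    {Ω 𝒳 : Type*} [MeasurableSpace Ω] [MeasurableSpace 𝒳]
    (μ : Measure Ω) [IsProbabilityMeasure μ]
    (X : Ω → 𝒳) (Y Ytil : Ω → ℤ)
    (hmX : Measurable X) (hmY : Measurable Y) (hmYt : Measurable Ytil)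
    (hYval : ∀ ω, Y ω = 1 ∨ Y ω = -1)
    (hYtval : ∀ ω, Ytil ω = 1 ∨ Ytil ω = -1)
    (p ep em : ℝ)
    (hp : (μ {ω | Y ω = 1}).toReal = p)
    (hep : (μ {ω | Ytil ω = -1 ∧ Y ω = 1}).toReal = ep * (μ {ω | Y ω = 1}).toReal)
    (hem : (μ {ω | Ytil ω = 1 ∧ Y ω = -1}).toReal = em * (μ {ω | Y ω = -1}).toReal)
    -- `Ỹ` is conditionally independent of `X` given `Y`
    (hCI : ∀ (A : Set 𝒳) (y y' : ℤ),
      (μ {ω | Y ω = y}).toReal * (μ {ω | X ω ∈ A ∧ Ytil ω = y' ∧ Y ω = y}).toReal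
        = (μ {ω | X ω ∈ A ∧ Y ω = y}).toReal * (μ {ω | Ytil ω = y' ∧ Y ω = y}).toReal)
    (f : 𝒳 → ℤ) (hmf : Measurable f)
    (hfval : ∀ x, f x = 1 ∨ f x = -1)
    (efp efm : ℝ)
    (hefp : (μ {ω | f (X ω) = -1 ∧ Y ω = 1}).toReal = efp * (μ {ω | Y ω = 1}).toReal)
    (hefm : (μ {ω | f (X ω) = 1 ∧ Y ω = -1}).toReal = efm * (μ {ω | Y ω = -1}).toReal) :
    (μ {ω | f (X ω) = 1 ∧ Ytil ω = 1}).toReal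
        - (μ {ω | f (X ω) = 1}).toReal * (μ {ω | Ytil ω = 1}).toReal
      = p * (1 - p) * (1 - ep - em) * (1 - efp - efm)
    ∧ (μ {ω | f (X ω) = 1 ∧ Ytil ω = -1}).toReal
        - (μ {ω | f (X ω) = 1}).toReal * (μ {ω | Ytil ω = -1}).toReal
      = -(p * (1 - p) * (1 - ep - em) * (1 - efp - efm)) := by
  have hf₁ := toReal_measure_one_and_eq_one_sub_mul (Z := fun ω => f (X ω)) (hmf.comp hmX)
    (fun ω => hfval (X ω)) (fun ω => Y ω = 1) hefp
  have hYt₁ := toReal_measure_one_and_eq_one_sub_mul hmYt hYtval (fun ω => Y ω = 1) hep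
  have hcov : (μ {ω | f (X ω) = 1 ∧ Ytil ω = 1}).toReal
        - (μ {ω | f (X ω) = 1}).toReal * (μ {ω | Ytil ω = 1}).toReal
      = p * (1 - p) * (1 - ep - em) * (1 - efp - efm) := by
    rw [toReal_measure_and_sub_mul_eq_of_condIndep (A := fun ω => f (X ω) = 1) hmY hYval
      (fun y => hCI {x | f x = 1} y 1) hf₁ hefm hYt₁ hem, hp]
    ring
  exact ⟨hcov, by rw [toReal_measure_and_neg_one_sub_mul hmYt hYtval, hcov]⟩

/-- For a binary classifier `f` (playing the role of `f*`) with error rates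
`efp = P(f(X) = -1 | Y = 1)` and `efm = P(f(X) = 1 | Y = -1)`, the marginal correlation between
`f(X)` and the noisy label `Ỹ` satisfies
`P(f(X)=1, Ỹ=1) - P(f(X)=1)P(Ỹ=1) = p(1-p)(1-ep-em)(1-efp-efm)` and
`P(f(X)=1, Ỹ=-1) - P(f(X)=1)P(Ỹ=-1) = -p(1-p)(1-ep-em)(1-efp-efm)`. -/
theorem peer_loss_stmt0
    {Ω 𝒳 : Type*} [MeasurableSpace Ω] [MeasurableSpace 𝒳]
    (μ : Measure Ω) [IsProbabilityMeasure μ]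
    (X : Ω → 𝒳) (Y Ytil : Ω → ℤ)
    (hmX : Measurable X) (hmY : Measurable Y) (hmYt : Measurable Ytil)
    (hYval : ∀ ω, Y ω = 1 ∨ Y ω = -1)
    (hYtval : ∀ ω, Ytil ω = 1 ∨ Ytil ω = -1)
    (p ep em : ℝ)
    (hp : (μ {ω | Y ω = 1}).toReal = p) (hp0 : 0 < p) (hp1 : p < 1)
    (hep : (μ {ω | Ytil ω = -1 ∧ Y ω = 1}).toReal = ep * (μ {ω | Y ω = 1}).toReal)
    (hem : (μ {ω | Ytil ω = 1 ∧ Y ω = -1}).toReal = em * (μ {ω | Y ω = -1}).toReal)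
    -- `Ỹ` is conditionally independent of `X` given `Y`
    (hCI : ∀ (A : Set 𝒳) (y y' : ℤ),
      (μ {ω | Y ω = y}).toReal * (μ {ω | X ω ∈ A ∧ Ytil ω = y' ∧ Y ω = y}).toReal
        = (μ {ω | X ω ∈ A ∧ Y ω = y}).toReal * (μ {ω | Ytil ω = y' ∧ Y ω = y}).toReal)
    (f : 𝒳 → ℤ) (hmf : Measurable f)
    (hfval : ∀ x, f x = 1 ∨ f x = -1)
    (efp efm : ℝ)
    (hefp : (μ {ω | f (X ω) = -1 ∧ Y ω = 1}).toReal = efp * (μ {ω | Y ω = 1}).toReal)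
    (hefm : (μ {ω | f (X ω) = 1 ∧ Y ω = -1}).toReal = efm * (μ {ω | Y ω = -1}).toReal) :
    (μ {ω | f (X ω) = 1 ∧ Ytil ω = 1}).toReal
        - (μ {ω | f (X ω) = 1}).toReal * (μ {ω | Ytil ω = 1}).toReal
      = p * (1 - p) * (1 - ep - em) * (1 - efp - efm)
    ∧ (μ {ω | f (X ω) = 1 ∧ Ytil ω = -1}).toReal
        - (μ {ω | f (X ω) = 1}).toReal * (μ {ω | Ytil ω = -1}).toReal
      = -(p * (1 - p) * (1 - ep - em) * (1 - efp - efm)) :=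
  peer_loss_stmt0_general μ X Y Ytil hmX hmY hmYt hYval hYtval p ep em hp hep hem hCI f hmf hfval
    efp efm hefp hefm
end

section
/- Define the matrix Δ ∈ ℝ^{2×2} by Δ_{k,l} = P(f*(X) = g(k), Ỹ = g(l)) − P(f*(X) = g(k))·P(Ỹ = g(l)) for k,l ∈ {1,2}, where g(1) = −1 and g(2) = +1, and f* is a classifier with error rates e*₊₁ := P(f*(X) = −1 | Y = +1), e*₋₁ := P(f*(X) = +1 | Y = −1). If e₋₁ + e₊₁ < 1 and e*₋₁ + e*₊₁ < 1, then both diagonal entries of Δ are strictly positive and both off-diagonal entries are strictly negative; equivalently, the sign matrix Sgn(Δ) (with entry 1 where Δ is positive and 0 otherwise) equals the 2×2 identity matrix. -/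
/-!
Conditional independence given a two-valued label `Y` factors the covariance of two events:
`P(E ∩ F) - P(E) P(F)` equals `P(Y = 1) P(Y = -1)` times the product of
`P(E | Y = 1) - P(E | Y = -1)` and `P(F | Y = 1) - P(F | Y = -1)`.
For `E = {f* X = s}` and `F = {Ỹ = t}` with `s, t = ±1` the two differences are
`s (1 - e*₋₁ - e*₊₁)` and `t (1 - e₋₁ - e₊₁)`, so `Δ k l = g k * g l * D` with `D > 0`.
-/

open MeasureTheory

theorem isCompl_setOf_eq_one_setOf_eq_neg_one {Ω : Type*} {Z : Ω → ℤ}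
    (hZ : ∀ ω, Z ω = 1 ∨ Z ω = -1) : IsCompl {ω | Z ω = 1} {ω | Z ω = -1} := by
  rw [isCompl_iff, disjoint_iff, codisjoint_iff]
  constructor <;> ext ω <;> rcases hZ ω with h | h <;> simp [h]

universe u

section

variable {Ω : Type u} [MeasurableSpace Ω] {μ : Measure Ω}

theorem measureReal_inter_add_inter_of_isCompl [IsFiniteMeasure μ] {A B : Set Ω}
    (hAB : IsCompl A B) (hA : MeasurableSet A) (S : Set Ω) :
    μ.real (S ∩ A) + μ.real (S ∩ B) = μ.real S := by
  rw [← hAB.compl_eq, ← Set.sdiff_eq]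
  exact measureReal_inter_add_sdiff hA

theorem measureReal_inter_div_sub_eq_of_pm_one [IsFiniteMeasure μ] {Z : Ω → ℤ}
    (hZ : Measurable Z) (hZval : ∀ ω, Z ω = 1 ∨ Z ω = -1) {Sp Sn : Set Ω} {ep en : ℝ}
    (hSp : μ.real Sp ≠ 0) (hSn : μ.real Sn ≠ 0)
    (hp : μ.real ({ω | Z ω = -1} ∩ Sp) = ep * μ.real Sp)
    (hn : μ.real ({ω | Z ω = 1} ∩ Sn) = en * μ.real Sn) {z : ℤ} (hz : z = 1 ∨ z = -1) :
    μ.real ({ω | Z ω = z} ∩ Sp) / μ.real Sp - μ.real ({ω | Z ω = z} ∩ Sn) / μ.real Sn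
      = z * (1 - en - ep) := by
  have hsplit (U : Set Ω) :
      μ.real ({ω | Z ω = 1} ∩ U) + μ.real ({ω | Z ω = -1} ∩ U) = μ.real U := by
    simpa only [Set.inter_comm U] using measureReal_inter_add_inter_of_isCompl
      (isCompl_setOf_eq_one_setOf_eq_neg_one hZval) (hZ (measurableSet_singleton 1)) U
  have hp' : μ.real ({ω | Z ω = 1} ∩ Sp) = (1 - ep) * μ.real Sp := by linarith [hsplit Sp]
  have hn' : μ.real ({ω | Z ω = -1} ∩ Sn) = (1 - en) * μ.real Sn := by linarith [hsplit Sn]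
  rcases hz with rfl | rfl
  · rw [hp', hn]
    field_simp
    ring
  · rw [hp, hn']
    field_simp
    push_cast
    ring

theorem measureReal_inter_sub_mul_eq_of_condIndep [IsProbabilityMeasure μ] {E F T S : Set Ω}
    (hT : MeasurableSet T) (hTS : IsCompl T S) (hT0 : μ.real T ≠ 0) (hS0 : μ.real S ≠ 0)
    (hCIT : μ.real T * μ.real (E ∩ (F ∩ T)) = μ.real (E ∩ T) * μ.real (F ∩ T))
    (hCIS : μ.real S * μ.real (E ∩ (F ∩ S)) = μ.real (E ∩ S) * μ.real (F ∩ S)) :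
    μ.real (E ∩ F) - μ.real E * μ.real F = μ.real T * μ.real S *
      (μ.real (E ∩ T) / μ.real T - μ.real (E ∩ S) / μ.real S) *
      (μ.real (F ∩ T) / μ.real T - μ.real (F ∩ S) / μ.real S) := by
  have hsplit := measureReal_inter_add_inter_of_isCompl (μ := μ) hTS hT
  have hTS1 : μ.real T + μ.real S = 1 := by simpa using hsplit Set.univ
  rw [← hsplit E, ← hsplit F, ← hsplit (E ∩ F), Set.inter_assoc, Set.inter_assoc]
  field_simp
  linear_combination μ.real S * hCIT + μ.real T * hCIS -
    (μ.real (E ∩ S) * μ.real (F ∩ S) * μ.real T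
      + μ.real (E ∩ T) * μ.real (F ∩ T) * μ.real S) * hTS1

/-- The sign matrix of the `Δ` matrix between the Bayes-type classifier `f`
and the noisy label `Ỹ` is the identity: diagonal entries of `Δ` are positive and off-diagonal
entries are negative, provided `ep + em < 1` and `efp + efm < 1`.  Here `g 0 = -1`, `g 1 = 1`. -/
theorem peer_loss_stmt1
    {Ω 𝒳 : Type*} [MeasurableSpace Ω] [MeasurableSpace 𝒳]
    (μ : Measure Ω) [IsProbabilityMeasure μ]
    (X : Ω → 𝒳) (Y Ytil : Ω → ℤ)
    (hmX : Measurable X) (hmY : Measurable Y) (hmYt : Measurable Ytil)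
    (hYval : ∀ ω, Y ω = 1 ∨ Y ω = -1)
    (hYtval : ∀ ω, Ytil ω = 1 ∨ Ytil ω = -1)
    (p ep em : ℝ)
    (hp : (μ {ω | Y ω = 1}).toReal = p) (hp0 : 0 < p) (hp1 : p < 1)
    (hep : (μ {ω | Ytil ω = -1 ∧ Y ω = 1}).toReal = ep * (μ {ω | Y ω = 1}).toReal)
    (hem : (μ {ω | Ytil ω = 1 ∧ Y ω = -1}).toReal = em * (μ {ω | Y ω = -1}).toReal)
    -- `Ỹ` is conditionally independent of `X` given `Y`
    (hCI : ∀ (A : Set 𝒳) (y y' : ℤ),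
      (μ {ω | Y ω = y}).toReal * (μ {ω | X ω ∈ A ∧ Ytil ω = y' ∧ Y ω = y}).toReal
        = (μ {ω | X ω ∈ A ∧ Y ω = y}).toReal * (μ {ω | Ytil ω = y' ∧ Y ω = y}).toReal)
    (f : 𝒳 → ℤ) (hmf : Measurable f)
    (hfval : ∀ x, f x = 1 ∨ f x = -1)
    (efp efm : ℝ)
    (hefp : (μ {ω | f (X ω) = -1 ∧ Y ω = 1}).toReal = efp * (μ {ω | Y ω = 1}).toReal)
    (hefm : (μ {ω | f (X ω) = 1 ∧ Y ω = -1}).toReal = efm * (μ {ω | Y ω = -1}).toReal)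
    (he : em + ep < 1) (hef : efm + efp < 1) :
    let g : Fin 2 → ℤ := fun k => if k = 0 then -1 else 1
    let Δ : Fin 2 → Fin 2 → ℝ := fun k l =>
      (μ {ω | f (X ω) = g k ∧ Ytil ω = g l}).toReal
        - (μ {ω | f (X ω) = g k}).toReal * (μ {ω | Ytil ω = g l}).toReal
    (∀ k, 0 < Δ k k) ∧ (∀ k l, k ≠ l → Δ k l < 0) ∧
      ((fun k l : Fin 2 => if 0 < Δ k l then (1 : ℝ) else 0)
        = fun k l : Fin 2 => if k = l then (1 : ℝ) else 0) := by
  intro g Δ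
  set T := {ω | Y ω = 1}
  have hT : MeasurableSet T := hmY (measurableSet_singleton 1)
  have hTS := isCompl_setOf_eq_one_setOf_eq_neg_one hYval
  have hp' : μ.real T = p := hp
  have hS : μ.real {ω | Y ω = -1} = 1 - p := by
    rw [← hTS.compl_eq, probReal_compl_eq_one_sub hT, hp']
  have hT0 : μ.real T ≠ 0 := hp' ▸ hp0.ne'
  have hS0 : μ.real {ω | Y ω = -1} ≠ 0 := by rw [hS]; linarith
  have hg (k : Fin 2) : g k = 1 ∨ g k = -1 := by fin_cases k <;> simp [g]
  have hΔ (k l : Fin 2) :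
      Δ k l = g k * g l * (p * (1 - p) * (1 - efm - efp) * (1 - em - ep)) := by
    rw [show Δ k l = _ from measureReal_inter_sub_mul_eq_of_condIndep
        (E := {ω | f (X ω) = g k}) (F := {ω | Ytil ω = g l}) hT hTS hT0 hS0
        (hCI {x | f x = g k} 1 (g l)) (hCI {x | f x = g k} (-1) (g l)),
      measureReal_inter_div_sub_eq_of_pm_one (Z := fun ω => f (X ω)) (hmf.comp hmX)
        (fun ω => hfval (X ω)) hT0 hS0 hefp hefm (hg k),
      measureReal_inter_div_sub_eq_of_pm_one hmYt hYtval hT0 hS0 hep hem (hg l), hp', hS]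
    ring
  have hD : 0 < p * (1 - p) * (1 - efm - efp) * (1 - em - ep) := by
    have : 0 < 1 - p := by linarith
    have : 0 < 1 - efm - efp := by linarith
    have : 0 < 1 - em - ep := by linarith
    positivity
  have hgg (k l : Fin 2) : (g k * g l : ℝ) = if k = l then 1 else -1 := by
    fin_cases k <;> fin_cases l <;> simp [g]
  refine ⟨fun k => ?_, fun k l hkl => ?_, funext₂ fun k l => ?_⟩
  · simpa [hΔ, hgg] using hD
  · simpa [hΔ, hgg, hkl] using hD
  · by_cases hkl : k = l <;> simp [hΔ, hgg, hkl, hD, hD.le]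
end
end

section
/- For any classifier f and loss function ℓ : ℝ × {−1,+1} → ℝ, the expected loss under noisy labels decomposes as E[ℓ(f(X), Ỹ)] = (1 − e₋₁ − e₊₁)·E_{(X,Y)∼D}[ℓ(f(X), Y)] + E_X[e₊₁·ℓ(f(X), −1) + e₋₁·ℓ(f(X), +1)]. -/
/-!
Split every integral according to the values of the clean label `Y` and the noisy label `Ỹ`.
Conditional independence says that on `{Y = y}` the event `{Ỹ = y'}` carries the fraction
`P(Ỹ = y' | Y = y)` of every integral of a function of `X`, so the noisy risk is
`(1 - ep) I₁(1) + ep I₁(-1) + em I₋₁(1) + (1 - em) I₋₁(-1)`, where `I_y(c)` is the integral of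
`ℓ(f(X), c)` over `{Y = y}`. Splitting the right-hand side the same way gives the same combination.
-/

open MeasureTheory

lemma compl_setOf_eq_of_forall_eq_or_eq {Ω α : Type*} {Z : Ω → α} {a b : α} (hab : a ≠ b)
    (hval : ∀ ω, Z ω = a ∨ Z ω = b) : {ω | Z ω = a}ᶜ = {ω | Z ω = b} := by
  ext ω
  rcases hval ω with h | h <;> simp [h, hab, hab.symm]

section TwoValued

variable {Ω α E : Type*} [MeasurableSpace Ω] [MeasurableSpace α] [MeasurableSingletonClass α]
  [NormedAddCommGroup E] {μ : Measure Ω} {Z : Ω → α} {a b : α}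
  {g : α → Ω → E}

lemma integrable_comp_of_forall_eq_or_eq (hZ : Measurable Z) (hab : a ≠ b)
    (hval : ∀ ω, Z ω = a ∨ Z ω = b) (hg : ∀ y, Integrable (g y) μ) :
    Integrable (fun ω => g (Z ω) ω) μ := by
  classical
  have hA : MeasurableSet {ω | Z ω = a} := hZ (measurableSet_singleton a)
  refine (Integrable.piecewise hA (hg a).integrableOn (hg b).integrableOn).congr
    (.of_forall fun ω => ?_)
  rcases hval ω with h | h
  · simp [h]
  · simp [h, hab.symm]

variable [NormedSpace ℝ E]

lemma integral_comp_eq_setIntegral_add (hZ : Measurable Z) (hab : a ≠ b)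
    (hval : ∀ ω, Z ω = a ∨ Z ω = b) (hg : ∀ y, Integrable (g y) μ) :
    ∫ ω, g (Z ω) ω ∂μ = ∫ ω in {ω | Z ω = a}, g a ω ∂μ + ∫ ω in {ω | Z ω = b}, g b ω ∂μ := by
  have hA : MeasurableSet {ω | Z ω = a} := hZ (measurableSet_singleton a)
  have hB : MeasurableSet {ω | Z ω = b} := hZ (measurableSet_singleton b)
  rw [← integral_add_compl hA (integrable_comp_of_forall_eq_or_eq hZ hab hval hg),
    compl_setOf_eq_of_forall_eq_or_eq hab hval]
  congr 1
  · exact setIntegral_congr_fun hA fun ω (hω : Z ω = a) => by rw [hω]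
  · exact setIntegral_congr_fun hB fun ω (hω : Z ω = b) => by rw [hω]

lemma setIntegral_comp_eq_setIntegral_add (hZ : Measurable Z) (hab : a ≠ b)
    (hval : ∀ ω, Z ω = a ∨ Z ω = b) (hg : ∀ y, Integrable (g y) μ) (s : Set Ω) :
    ∫ ω in s, g (Z ω) ω ∂μ
      = ∫ ω in {ω | Z ω = a} ∩ s, g a ω ∂μ + ∫ ω in {ω | Z ω = b} ∩ s, g b ω ∂μ := by
  have hA : MeasurableSet {ω | Z ω = a} := hZ (measurableSet_singleton a)
  have hB : MeasurableSet {ω | Z ω = b} := hZ (measurableSet_singleton b)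
  rw [integral_comp_eq_setIntegral_add hZ hab hval fun y => (hg y).restrict,
    Measure.restrict_restrict hA, Measure.restrict_restrict hB]

end TwoValued

/-- On a null set `A` both integrals vanish; otherwise divide `hCI` by `μ A`. -/
lemma setIntegral_inter_eq_mul_of_condIndep {Ω : Type*} [MeasurableSpace Ω] {μ : Measure Ω}
    [IsFiniteMeasure μ] {A B : Set Ω} {h : Ω → ℝ} {e : ℝ}
    (hCI : (μ A).toReal * ∫ ω in B ∩ A, h ω ∂μ = (μ (B ∩ A)).toReal * ∫ ω in A, h ω ∂μ)
    (he : (μ (B ∩ A)).toReal = e * (μ A).toReal) :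
    ∫ ω in B ∩ A, h ω ∂μ = e * ∫ ω in A, h ω ∂μ := by
  by_cases hA : μ A = 0
  · rw [setIntegral_measure_zero h hA,
      setIntegral_measure_zero h (measure_mono_null Set.inter_subset_right hA), mul_zero]
  · refine mul_left_cancel₀ (ENNReal.toReal_ne_zero.mpr ⟨hA, measure_ne_top μ A⟩) ?_
    rw [hCI, he]
    ring

theorem peer_loss_stmt3_general
    {Ω 𝒳 : Type*} [MeasurableSpace Ω] [MeasurableSpace 𝒳]
    (μ : Measure Ω) [IsProbabilityMeasure μ]
    (X : Ω → 𝒳) (Y Ytil : Ω → ℤ)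
    (hmY : Measurable Y) (hmYt : Measurable Ytil)
    (hYval : ∀ ω, Y ω = 1 ∨ Y ω = -1)
    (hYtval : ∀ ω, Ytil ω = 1 ∨ Ytil ω = -1)
    (ep em : ℝ)
    (hep : (μ {ω | Ytil ω = -1 ∧ Y ω = 1}).toReal = ep * (μ {ω | Y ω = 1}).toReal)
    (hem : (μ {ω | Ytil ω = 1 ∧ Y ω = -1}).toReal = em * (μ {ω | Y ω = -1}).toReal)
    -- `Ỹ` is conditionally independent of `X` given `Y` (functional form)
    (hCI : ∀ (h : 𝒳 → ℝ), Integrable (fun ω => h (X ω)) μ → ∀ y y' : ℤ,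
      (μ {ω | Y ω = y}).toReal * ∫ ω in {ω | Ytil ω = y' ∧ Y ω = y}, h (X ω) ∂μ
        = (μ {ω | Ytil ω = y' ∧ Y ω = y}).toReal * ∫ ω in {ω | Y ω = y}, h (X ω) ∂μ)
    (ℓ : ℝ → ℤ → ℝ) (f : 𝒳 → ℝ)
    (hInt : ∀ y : ℤ, Integrable (fun ω => ℓ (f (X ω)) y) μ) :
    ∫ ω, ℓ (f (X ω)) (Ytil ω) ∂μ
      = (1 - em - ep) * ∫ ω, ℓ (f (X ω)) (Y ω) ∂μ
        + ∫ ω, (ep * ℓ (f (X ω)) (-1) + em * ℓ (f (X ω)) 1) ∂μ := by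
  have hne : (1 : ℤ) ≠ -1 := by decide
  set I : ℤ → ℤ → ℝ := fun y c => ∫ ω in {ω | Y ω = y}, ℓ (f (X ω)) c ∂μ
  have splitY (c : ℤ) : ∫ ω, ℓ (f (X ω)) c ∂μ = I 1 c + I (-1) c :=
    integral_comp_eq_setIntegral_add (g := fun _ ω => ℓ (f (X ω)) c) hmY hne hYval fun _ => hInt c
  have splitYt (y c : ℤ) : I y c = ∫ ω in {ω | Ytil ω = 1 ∧ Y ω = y}, ℓ (f (X ω)) c ∂μ
      + ∫ ω in {ω | Ytil ω = -1 ∧ Y ω = y}, ℓ (f (X ω)) c ∂μ :=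
    setIntegral_comp_eq_setIntegral_add (g := fun _ ω => ℓ (f (X ω)) c) hmYt hne hYtval
      (fun _ => hInt c) _
  have flipPos (c : ℤ) : ∫ ω in {ω | Ytil ω = -1 ∧ Y ω = 1}, ℓ (f (X ω)) c ∂μ = ep * I 1 c :=
    setIntegral_inter_eq_mul_of_condIndep (hCI (fun x => ℓ (f x) c) (hInt c) 1 (-1)) hep
  have flipNeg (c : ℤ) : ∫ ω in {ω | Ytil ω = 1 ∧ Y ω = -1}, ℓ (f (X ω)) c ∂μ = em * I (-1) c :=
    setIntegral_inter_eq_mul_of_condIndep (hCI (fun x => ℓ (f x) c) (hInt c) (-1) 1) hem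
  have hNoisy : ∫ ω, ℓ (f (X ω)) (Ytil ω) ∂μ
      = ∫ ω in {ω | Ytil ω = 1 ∧ Y ω = 1}, ℓ (f (X ω)) 1 ∂μ + ep * I 1 (-1)
        + (em * I (-1) 1 + ∫ ω in {ω | Ytil ω = -1 ∧ Y ω = -1}, ℓ (f (X ω)) (-1) ∂μ) := by
    rw [integral_comp_eq_setIntegral_add (g := fun _ ω => ℓ (f (X ω)) (Ytil ω)) hmY hne hYval
      fun _ => integrable_comp_of_forall_eq_or_eq hmYt hne hYtval hInt,
      setIntegral_comp_eq_setIntegral_add hmYt hne hYtval hInt,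
      setIntegral_comp_eq_setIntegral_add hmYt hne hYtval hInt, ← flipPos, ← flipNeg]
    rfl
  have hClean : ∫ ω, ℓ (f (X ω)) (Y ω) ∂μ = I 1 1 + I (-1) (-1) :=
    integral_comp_eq_setIntegral_add hmY hne hYval hInt
  have hBias : ∫ ω, (ep * ℓ (f (X ω)) (-1) + em * ℓ (f (X ω)) 1) ∂μ
      = ep * (I 1 (-1) + I (-1) (-1)) + em * (I 1 1 + I (-1) 1) := by
    rw [integral_add ((hInt (-1)).const_mul ep) ((hInt 1).const_mul em), integral_const_mul,
      integral_const_mul, splitY, splitY]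
  rw [hNoisy, hClean, hBias]
  linear_combination -splitYt 1 1 - splitYt (-1) (-1) - flipPos 1 - flipNeg (-1)

/-- The expected loss under noisy labels decomposes as
`E[ℓ(f(X), Ỹ)] = (1 - em - ep) E[ℓ(f(X), Y)] + E_X[ep ℓ(f(X), -1) + em ℓ(f(X), 1)]`. -/
theorem peer_loss_stmt3
    {Ω 𝒳 : Type*} [MeasurableSpace Ω] [MeasurableSpace 𝒳]
    (μ : Measure Ω) [IsProbabilityMeasure μ]
    (X : Ω → 𝒳) (Y Ytil : Ω → ℤ)
    (hmX : Measurable X) (hmY : Measurable Y) (hmYt : Measurable Ytil)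
    (hYval : ∀ ω, Y ω = 1 ∨ Y ω = -1)
    (hYtval : ∀ ω, Ytil ω = 1 ∨ Ytil ω = -1)
    (p ep em : ℝ)
    (hp : (μ {ω | Y ω = 1}).toReal = p) (hp0 : 0 < p) (hp1 : p < 1)
    (hep : (μ {ω | Ytil ω = -1 ∧ Y ω = 1}).toReal = ep * (μ {ω | Y ω = 1}).toReal)
    (hem : (μ {ω | Ytil ω = 1 ∧ Y ω = -1}).toReal = em * (μ {ω | Y ω = -1}).toReal)
    -- `Ỹ` is conditionally independent of `X` given `Y` (functional form)
    (hCI : ∀ (h : 𝒳 → ℝ), Integrable (fun ω => h (X ω)) μ → ∀ y y' : ℤ,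
      (μ {ω | Y ω = y}).toReal * ∫ ω in {ω | Ytil ω = y' ∧ Y ω = y}, h (X ω) ∂μ
        = (μ {ω | Ytil ω = y' ∧ Y ω = y}).toReal * ∫ ω in {ω | Y ω = y}, h (X ω) ∂μ)
    (ℓ : ℝ → ℤ → ℝ) (f : 𝒳 → ℝ) (hmf : Measurable f)
    (hInt : ∀ y : ℤ, Integrable (fun ω => ℓ (f (X ω)) y) μ) :
    ∫ ω, ℓ (f (X ω)) (Ytil ω) ∂μ
      = (1 - em - ep) * ∫ ω, ℓ (f (X ω)) (Y ω) ∂μ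
        + ∫ ω, (ep * ℓ (f (X ω)) (-1) + em * ℓ (f (X ω)) 1) ∂μ :=
  peer_loss_stmt3_general μ X Y Ytil hmY hmYt hYval hYtval ep em hep hem hCI ℓ f hInt
end

section
/- Let (X_{n₁}, Ỹ_{n₁}) and (X_{n₂}, Ỹ_{n₂}) be two independent draws from the noisy distribution of (X, Ỹ). For any classifier f and loss function ℓ : ℝ × {−1,+1} → ℝ, E[ℓ(f(X_{n₁}), Ỹ_{n₂})] = (1 − e₋₁ − e₊₁)·E[ℓ(f(X_{n₁}), Y_{n₂})] + E_X[e₊₁·ℓ(f(X), −1) + e₋₁·ℓ(f(X), +1)], where Y_{n₂} is the clean label of the second sample and E[ℓ(f(X_{n₁}), Y_{n₂})] is taken over the product of the two marginals. -/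
/-!
Since the two draws are independent, the loss on `(X_{n₁}, Z_{n₂})` for a `±1`-valued label `Z`
averages to `P(Z = 1) E[ℓ(f X, 1)] + P(Z = -1) E[ℓ(f X, -1)]`, so only the marginal of the label
matters. The noise model gives `P(Ỹ = 1) = (1 - e₊₁) P(Y = 1) + e₋₁ P(Y = -1)` and symmetrically
for `-1`; comparing coefficients of `E[ℓ(f X, ±1)]` yields the identity.
-/

open MeasureTheory

theorem measureReal_eq_add_of_two_valued {Ω L : Type*} [MeasurableSpace Ω] [MeasurableSpace L]
    [MeasurableSingletonClass L] {μ : Measure Ω} [IsFiniteMeasure μ] {Y : Ω → L}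
    (hY : Measurable Y) {a b : L} (hab : a ≠ b) (hval : ∀ ω, Y ω = a ∨ Y ω = b) (A : Set Ω) :
    μ.real A = μ.real (A ∩ {ω | Y ω = a}) + μ.real (A ∩ {ω | Y ω = b}) := by
  have hcompl : A \ {ω | Y ω = a} = A ∩ {ω | Y ω = b} := by
    ext ω
    constructor
    · rintro ⟨hA, ha⟩
      exact ⟨hA, (hval ω).resolve_left ha⟩
    · rintro ⟨hA, hb⟩
      exact ⟨hA, fun ha => hab (ha.symm.trans hb)⟩
  rw [← hcompl]
  exact (measureReal_inter_add_sdiff (hY (measurableSet_singleton a))).symm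

theorem integral_prod_comp_snd_eq_sum {α β L : Type*} [MeasurableSpace α] [MeasurableSpace β]
    [MeasurableSpace L] [MeasurableSingletonClass L] {μ : Measure α} {ν : Measure β} [SFinite μ]
    [IsFiniteMeasure ν] (G : α → L → ℝ) {Z : β → L} (hZ : Measurable Z) (s : Finset L)
    (hZs : ∀ b, Z b ∈ s) (hG : ∀ y ∈ s, Integrable (fun a => G a y) μ) :
    ∫ w, G w.1 (Z w.2) ∂(μ.prod ν) = ∑ y ∈ s, ν.real {b | Z b = y} * ∫ a, G a y ∂μ := by
  classical
  have hlevel : ∀ y, MeasurableSet {b | Z b = y} := fun y => hZ (measurableSet_singleton y)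
  have hind : ∀ y, Integrable ({b | Z b = y}.indicator 1) ν := fun y =>
    (integrable_const (1 : ℝ)).indicator (hlevel y)
  have hdecomp : ∀ w : α × β,
      G w.1 (Z w.2) = ∑ y ∈ s, G w.1 y * {b | Z b = y}.indicator 1 w.2 := by
    intro w
    simp [Set.indicator_apply, hZs w.2]
  simp_rw [hdecomp]
  rw [integral_finsetSum _ fun y hy => (hG y hy).mul_prod (hind y)]
  refine Finset.sum_congr rfl fun y _ => ?_
  rw [integral_prod_mul (fun a => G a y), integral_indicator_one (hlevel y), mul_comm]

section NoisyLabels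

variable {Ω : Type*} [MeasurableSpace Ω] {μ : Measure Ω} [IsFiniteMeasure μ] {Y Ytil : Ω → ℤ}
  {ep em : ℝ}

theorem measureReal_noisy_eq_one (hmY : Measurable Y) (hYval : ∀ ω, Y ω = 1 ∨ Y ω = -1)
    (hmYt : Measurable Ytil) (hYtval : ∀ ω, Ytil ω = 1 ∨ Ytil ω = -1)
    (hep : μ.real {ω | Ytil ω = -1 ∧ Y ω = 1} = ep * μ.real {ω | Y ω = 1})
    (hem : μ.real {ω | Ytil ω = 1 ∧ Y ω = -1} = em * μ.real {ω | Y ω = -1}) :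
    μ.real {ω | Ytil ω = 1} = (1 - ep) * μ.real {ω | Y ω = 1} + em * μ.real {ω | Y ω = -1} := by
  have hsplit := measureReal_eq_add_of_two_valued (μ := μ) hmY (by decide) hYval {ω | Ytil ω = 1}
  have hclean := measureReal_eq_add_of_two_valued (μ := μ) hmYt (by decide) hYtval {ω | Y ω = 1}
  rw [Set.inter_comm, Set.inter_comm {ω | Y ω = 1}] at hclean
  change _ = μ.real {ω | Ytil ω = 1 ∧ Y ω = 1} + μ.real {ω | Ytil ω = 1 ∧ Y ω = -1} at hsplit
  change _ = μ.real {ω | Ytil ω = 1 ∧ Y ω = 1} + μ.real {ω | Ytil ω = -1 ∧ Y ω = 1} at hclean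
  linarith

theorem measureReal_noisy_eq_neg_one (hmY : Measurable Y) (hYval : ∀ ω, Y ω = 1 ∨ Y ω = -1)
    (hmYt : Measurable Ytil) (hYtval : ∀ ω, Ytil ω = 1 ∨ Ytil ω = -1)
    (hep : μ.real {ω | Ytil ω = -1 ∧ Y ω = 1} = ep * μ.real {ω | Y ω = 1})
    (hem : μ.real {ω | Ytil ω = 1 ∧ Y ω = -1} = em * μ.real {ω | Y ω = -1}) :
    μ.real {ω | Ytil ω = -1} = ep * μ.real {ω | Y ω = 1} + (1 - em) * μ.real {ω | Y ω = -1} := by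
  have hmassY := measureReal_eq_add_of_two_valued (μ := μ) hmY (by decide) hYval Set.univ
  have hmassYt := measureReal_eq_add_of_two_valued (μ := μ) hmYt (by decide) hYtval Set.univ
  simp only [Set.univ_inter] at hmassY hmassYt
  linarith [measureReal_noisy_eq_one hmY hYval hmYt hYtval hep hem]

end NoisyLabels

theorem peer_loss_stmt4_general
    {Ω 𝒳 : Type*} [MeasurableSpace Ω]
    (μ : Measure Ω) [IsProbabilityMeasure μ]
    (X : Ω → 𝒳) (Y Ytil : Ω → ℤ)
    (hmY : Measurable Y) (hmYt : Measurable Ytil)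
    (hYval : ∀ ω, Y ω = 1 ∨ Y ω = -1)
    (hYtval : ∀ ω, Ytil ω = 1 ∨ Ytil ω = -1)
    (ep em : ℝ)
    (hep : (μ {ω | Ytil ω = -1 ∧ Y ω = 1}).toReal = ep * (μ {ω | Y ω = 1}).toReal)
    (hem : (μ {ω | Ytil ω = 1 ∧ Y ω = -1}).toReal = em * (μ {ω | Y ω = -1}).toReal)
    (ℓ : ℝ → ℤ → ℝ) (f : 𝒳 → ℝ)
    (hInt : ∀ y : ℤ, Integrable (fun ω => ℓ (f (X ω)) y) μ) :
    ∫ w, ℓ (f (X w.1)) (Ytil w.2) ∂(μ.prod μ)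
      = (1 - em - ep) * ∫ w, ℓ (f (X w.1)) (Y w.2) ∂(μ.prod μ)
        + ∫ ω, (ep * ℓ (f (X ω)) (-1) + em * ℓ (f (X ω)) 1) ∂μ := by
  have hmass := measureReal_eq_add_of_two_valued (μ := μ) hmY (by decide) hYval Set.univ
  simp only [Set.univ_inter, probReal_univ] at hmass
  have hsplit : ∀ Z : Ω → ℤ, Measurable Z → (∀ ω, Z ω = 1 ∨ Z ω = -1) →
      ∫ w, ℓ (f (X w.1)) (Z w.2) ∂(μ.prod μ) = μ.real {ω | Z ω = 1} * ∫ ω, ℓ (f (X ω)) 1 ∂μ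
        + μ.real {ω | Z ω = -1} * ∫ ω, ℓ (f (X ω)) (-1) ∂μ := fun Z hmZ hZval => by
    rw [integral_prod_comp_snd_eq_sum (fun ω y => ℓ (f (X ω)) y) hmZ {1, -1}
      (by simpa using hZval) fun y _ => hInt y, Finset.sum_pair (by decide)]
  rw [hsplit Ytil hmYt hYtval, hsplit Y hmY hYval,
    measureReal_noisy_eq_one hmY hYval hmYt hYtval hep hem,
    measureReal_noisy_eq_neg_one hmY hYval hmYt hYtval hep hem,
    integral_add ((hInt (-1)).const_mul ep) ((hInt 1).const_mul em),
    integral_const_mul, integral_const_mul]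
  linear_combination (em * ∫ ω, ℓ (f (X ω)) 1 ∂μ + ep * ∫ ω, ℓ (f (X ω)) (-1) ∂μ) * hmass.symm

/-- For two independent draws `(X_{n₁}, Ỹ_{n₁})` and `(X_{n₂}, Ỹ_{n₂})`
(modelled by the product measure `μ.prod μ`),
`E[ℓ(f(X_{n₁}), Ỹ_{n₂})] = (1 - em - ep) E[ℓ(f(X_{n₁}), Y_{n₂})]
  + E_X[ep ℓ(f(X), -1) + em ℓ(f(X), 1)]`. -/
theorem peer_loss_stmt4
    {Ω 𝒳 : Type*} [MeasurableSpace Ω] [MeasurableSpace 𝒳]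
    (μ : Measure Ω) [IsProbabilityMeasure μ]
    (X : Ω → 𝒳) (Y Ytil : Ω → ℤ)
    (hmX : Measurable X) (hmY : Measurable Y) (hmYt : Measurable Ytil)
    (hYval : ∀ ω, Y ω = 1 ∨ Y ω = -1)
    (hYtval : ∀ ω, Ytil ω = 1 ∨ Ytil ω = -1)
    (p ep em : ℝ)
    (hp : (μ {ω | Y ω = 1}).toReal = p) (hp0 : 0 < p) (hp1 : p < 1)
    (hep : (μ {ω | Ytil ω = -1 ∧ Y ω = 1}).toReal = ep * (μ {ω | Y ω = 1}).toReal)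
    (hem : (μ {ω | Ytil ω = 1 ∧ Y ω = -1}).toReal = em * (μ {ω | Y ω = -1}).toReal)
    -- `Ỹ` is conditionally independent of `X` given `Y` (functional form)
    (hCI : ∀ (h : 𝒳 → ℝ), Integrable (fun ω => h (X ω)) μ → ∀ y y' : ℤ,
      (μ {ω | Y ω = y}).toReal * ∫ ω in {ω | Ytil ω = y' ∧ Y ω = y}, h (X ω) ∂μ
        = (μ {ω | Ytil ω = y' ∧ Y ω = y}).toReal * ∫ ω in {ω | Y ω = y}, h (X ω) ∂μ)
    (ℓ : ℝ → ℤ → ℝ) (f : 𝒳 → ℝ) (hmf : Measurable f)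
    (hInt : ∀ y : ℤ, Integrable (fun ω => ℓ (f (X ω)) y) μ) :
    ∫ w, ℓ (f (X w.1)) (Ytil w.2) ∂(μ.prod μ)
      = (1 - em - ep) * ∫ w, ℓ (f (X w.1)) (Y w.2) ∂(μ.prod μ)
        + ∫ ω, (ep * ℓ (f (X ω)) (-1) + em * ℓ (f (X ω)) 1) ∂μ :=
  peer_loss_stmt4_general μ X Y Ytil hmY hmYt hYval hYtval ep em hep hem ℓ f hInt
end

section
/- Peer loss is invariant to label noise: for any classifier f and any loss function ℓ : ℝ × {−1,+1} → ℝ, E_{D̃}[ℓ_peer(f(X), Ỹ)] = (1 − e₋₁ − e₊₁)·E_D[ℓ_peer(f(X), Y)], where the left-hand expectation is over (X,Ỹ) and its peer samples drawn i.i.d. from the noisy distribution D̃ and the right-hand expectation is over (X,Y) and its peer samples drawn i.i.d. from the clean distribution D. -/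
open MeasureTheory ProbabilityTheory

/-!
Write `g y = ℓ(f(X), y)`. For any `±1` label `Z`, the peer risk equals
`Cov(g 1, 𝟙{Z = 1}) - Cov(g (-1), 𝟙{Z = 1})`, since `𝟙{Z = -1} = 1 - 𝟙{Z = 1}`.
Against functions of `X`, conditional independence lets `𝟙{Ỹ = 1}` act as the mixture
`(1 - e₊₁) 𝟙{Y = 1} + e₋₁ 𝟙{Y = -1}`, so each covariance with `𝟙{Ỹ = 1}` is
`(1 - e₊₁ - e₋₁)` times the corresponding covariance with `𝟙{Y = 1}`.
-/

lemma setOf_eq_neg_one_eq_compl {Ω : Type*} {Z : Ω → ℤ} (hZ : ∀ ω, Z ω = 1 ∨ Z ω = -1) :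
    {ω | Z ω = -1} = {ω | Z ω = 1}ᶜ := by
  ext ω
  rcases hZ ω with h | h <;> simp [h]

section PeerRisk

variable {Ω : Type*} [MeasurableSpace Ω] {μ : Measure Ω}

noncomputable def peerRisk (μ : Measure Ω) (g : ℤ → Ω → ℝ) (Z : Ω → ℤ) : ℝ :=
  ∫ ω, g (Z ω) ω ∂μ - ∫ w, g (Z w.2) w.1 ∂(μ.prod μ)

/-- `Cov(h, 𝟙_s)` when `μ` is a probability measure. -/
noncomputable def covIndicator (μ : Measure Ω) (h : Ω → ℝ) (s : Set Ω) : ℝ :=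
  ∫ ω in s, h ω ∂μ - μ.real s * ∫ ω, h ω ∂μ

lemma integral_comp_label {Z : Ω → ℤ} (hZm : Measurable Z) (hZ : ∀ ω, Z ω = 1 ∨ Z ω = -1)
    {G : ℤ → Ω → ℝ} (hG₁ : Integrable (G 1) μ) (hG₂ : Integrable (G (-1)) μ) :
    ∫ ω, G (Z ω) ω ∂μ =
      ∫ ω in {ω | Z ω = 1}, G 1 ω ∂μ + ∫ ω in {ω | Z ω = -1}, G (-1) ω ∂μ := by
  have hm₁ : MeasurableSet {ω | Z ω = 1} := hZm (measurableSet_singleton 1)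
  have hm₂ : MeasurableSet {ω | Z ω = -1} := hZm (measurableSet_singleton (-1))
  have hsplit : (fun ω => G (Z ω) ω) = fun ω =>
      {ω | Z ω = 1}.indicator (G 1) ω + {ω | Z ω = -1}.indicator (G (-1)) ω := by
    funext ω
    rcases hZ ω with h | h <;> simp [Set.indicator, h]
  rw [hsplit, integral_add (hG₁.indicator hm₁) (hG₂.indicator hm₂),
    integral_indicator hm₁, integral_indicator hm₂]

lemma integral_prod_comp_label [IsFiniteMeasure μ] {ν : Measure Ω} [IsFiniteMeasure ν]
    {Z : Ω → ℤ} (hZm : Measurable Z) (hZ : ∀ ω, Z ω = 1 ∨ Z ω = -1)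
    {G : ℤ → Ω → ℝ} (hG₁ : Integrable (G 1) μ) (hG₂ : Integrable (G (-1)) μ) :
    ∫ w, G (Z w.2) w.1 ∂(μ.prod ν) =
      (∫ ω, G 1 ω ∂μ) * ν.real {ω | Z ω = 1} + (∫ ω, G (-1) ω ∂μ) * ν.real {ω | Z ω = -1} := by
  have hm₁ : MeasurableSet {ω | Z ω = 1} := hZm (measurableSet_singleton 1)
  have hm₂ : MeasurableSet {ω | Z ω = -1} := hZm (measurableSet_singleton (-1))
  have hsplit : (fun w : Ω × Ω => G (Z w.2) w.1) = fun w =>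
      G 1 w.1 * {ω | Z ω = 1}.indicator 1 w.2 + G (-1) w.1 * {ω | Z ω = -1}.indicator 1 w.2 := by
    funext w
    rcases hZ w.2 with h | h <;> simp [Set.indicator, h]
  have hi₁ : Integrable ({ω | Z ω = 1}.indicator (1 : Ω → ℝ)) ν :=
    (integrable_const (1 : ℝ)).indicator hm₁
  have hi₂ : Integrable ({ω | Z ω = -1}.indicator (1 : Ω → ℝ)) ν :=
    (integrable_const (1 : ℝ)).indicator hm₂
  rw [hsplit, integral_add (hG₁.mul_prod hi₁) (hG₂.mul_prod hi₂),
    integral_prod_mul, integral_prod_mul, integral_indicator_one hm₁, integral_indicator_one hm₂]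

lemma covIndicator_compl [IsProbabilityMeasure μ] {s : Set Ω} (hs : MeasurableSet s)
    {h : Ω → ℝ} (hh : Integrable h μ) : covIndicator μ h sᶜ = -covIndicator μ h s := by
  rw [covIndicator, covIndicator, setIntegral_compl hs hh, probReal_compl_eq_one_sub hs]
  ring

theorem peerRisk_eq_covIndicator_sub [IsProbabilityMeasure μ] {Z : Ω → ℤ} (hZm : Measurable Z)
    (hZ : ∀ ω, Z ω = 1 ∨ Z ω = -1) {g : ℤ → Ω → ℝ} (hg₁ : Integrable (g 1) μ)
    (hg₂ : Integrable (g (-1)) μ) :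
    peerRisk μ g Z =
      covIndicator μ (g 1) {ω | Z ω = 1} - covIndicator μ (g (-1)) {ω | Z ω = 1} := by
  have hm : MeasurableSet {ω | Z ω = 1} := hZm (measurableSet_singleton 1)
  have hcompl := covIndicator_compl hm hg₂
  rw [← setOf_eq_neg_one_eq_compl hZ] at hcompl
  rw [peerRisk, integral_comp_label hZm hZ hg₁ hg₂, integral_prod_comp_label hZm hZ hg₁ hg₂]
  unfold covIndicator at hcompl ⊢
  linear_combination hcompl

lemma cond_real_mul_measureReal [IsFiniteMeasure μ] {s : Set Ω} (hs : MeasurableSet s)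
    (t : Set Ω) : μ[|s].real t * μ.real s = μ.real (t ∩ s) := by
  simp only [Measure.real, ← ENNReal.toReal_mul, cond_mul_eq_inter hs, Set.inter_comm]

lemma cond_real_eq_of_measureReal_inter_eq [IsFiniteMeasure μ] {s t : Set Ω}
    (hs : MeasurableSet s) (hs₀ : μ.real s ≠ 0) {a : ℝ} (h : μ.real (t ∩ s) = a * μ.real s) :
    μ[|s].real t = a :=
  mul_right_cancel₀ hs₀ (by rw [cond_real_mul_measureReal hs, h])

lemma setIntegral_inter_eq_cond_mul [IsFiniteMeasure μ] {s t : Set Ω} (hs : MeasurableSet s)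
    (hs₀ : μ.real s ≠ 0) {h : Ω → ℝ}
    (hCI : μ.real s * ∫ ω in t ∩ s, h ω ∂μ = μ.real (t ∩ s) * ∫ ω in s, h ω ∂μ) :
    ∫ ω in t ∩ s, h ω ∂μ = μ[|s].real t * ∫ ω in s, h ω ∂μ := by
  rw [← cond_real_mul_measureReal hs] at hCI
  exact mul_left_cancel₀ hs₀ (by linear_combination hCI)

theorem covIndicator_eq_of_cond [IsProbabilityMeasure μ] {s t : Set Ω} (hs : MeasurableSet s)
    {h : Ω → ℝ} (hh : Integrable h μ)
    (hCI : ∫ ω in t ∩ s, h ω ∂μ = μ[|s].real t * ∫ ω in s, h ω ∂μ)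
    (hCIc : ∫ ω in t ∩ sᶜ, h ω ∂μ = μ[|sᶜ].real t * ∫ ω in sᶜ, h ω ∂μ) :
    covIndicator μ h t = (μ[|s].real t - μ[|sᶜ].real t) * covIndicator μ h s := by
  have hint := integral_inter_add_sdiff (s := t) hs hh.integrableOn
  have hmeas := measureReal_inter_add_sdiff (μ := μ) (s := t) hs
  rw [Set.sdiff_eq] at hint hmeas
  rw [← cond_real_mul_measureReal hs, ← cond_real_mul_measureReal hs.compl] at hmeas
  have hcompl := covIndicator_compl hs hh
  unfold covIndicator at hcompl ⊢
  rw [← hint, ← hmeas, hCI, hCIc]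
  linear_combination μ[|sᶜ].real t * hcompl

theorem covIndicator_noisy_eq_mul [IsProbabilityMeasure μ] {Y Ytil : Ω → ℤ} (hmY : Measurable Y)
    (hmYt : Measurable Ytil) (hY : ∀ ω, Y ω = 1 ∨ Y ω = -1) (hYt : ∀ ω, Ytil ω = 1 ∨ Ytil ω = -1)
    (hY₁ : μ.real {ω | Y ω = 1} ≠ 0) (hY₂ : μ.real {ω | Y ω = -1} ≠ 0) {ep em : ℝ}
    (hep : μ.real {ω | Ytil ω = -1 ∧ Y ω = 1} = ep * μ.real {ω | Y ω = 1})
    (hem : μ.real {ω | Ytil ω = 1 ∧ Y ω = -1} = em * μ.real {ω | Y ω = -1})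
    {h : Ω → ℝ} (hh : Integrable h μ)
    (hCI₁ : μ.real {ω | Y ω = 1} * ∫ ω in {ω | Ytil ω = 1 ∧ Y ω = 1}, h ω ∂μ =
      μ.real {ω | Ytil ω = 1 ∧ Y ω = 1} * ∫ ω in {ω | Y ω = 1}, h ω ∂μ)
    (hCI₂ : μ.real {ω | Y ω = -1} * ∫ ω in {ω | Ytil ω = 1 ∧ Y ω = -1}, h ω ∂μ =
      μ.real {ω | Ytil ω = 1 ∧ Y ω = -1} * ∫ ω in {ω | Y ω = -1}, h ω ∂μ) :
    covIndicator μ h {ω | Ytil ω = 1} = (1 - em - ep) * covIndicator μ h {ω | Y ω = 1} := by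
  set s := {ω | Y ω = 1}
  set t := {ω | Ytil ω = 1}
  have hs : MeasurableSet s := hmY (measurableSet_singleton 1)
  have hs' : MeasurableSet {ω | Y ω = -1} := hmY (measurableSet_singleton (-1))
  have ht' : MeasurableSet {ω | Ytil ω = -1} := hmYt (measurableSet_singleton (-1))
  have hsc : sᶜ = {ω | Y ω = -1} := (setOf_eq_neg_one_eq_compl hY).symm
  have hstay : μ[|s].real t = 1 - ep := by
    have : IsProbabilityMeasure μ[|s] := cond_isProbabilityMeasure ((measureReal_ne_zero_iff).1 hY₁)
    rw [← compl_compl t, ← setOf_eq_neg_one_eq_compl hYt, probReal_compl_eq_one_sub ht',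
      cond_real_eq_of_measureReal_inter_eq (t := {ω | Ytil ω = -1}) hs hY₁ hep]
  have hflip : μ[|sᶜ].real t = em := by
    rw [hsc]
    exact cond_real_eq_of_measureReal_inter_eq hs' hY₂ hem
  have hCIc := setIntegral_inter_eq_cond_mul (t := t) hs' hY₂ hCI₂
  rw [← hsc] at hCIc
  rw [covIndicator_eq_of_cond hs hh (setIntegral_inter_eq_cond_mul (t := t) hs hY₁ hCI₁) hCIc,
    hstay, hflip]
  ring

end PeerRisk

theorem peer_loss_stmt5_general
    {Ω 𝒳 : Type*} [MeasurableSpace Ω] [MeasurableSpace 𝒳]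
    (μ : Measure Ω) [IsProbabilityMeasure μ]
    (X : Ω → 𝒳) (Y Ytil : Ω → ℤ)
    (hmY : Measurable Y) (hmYt : Measurable Ytil)
    (hYval : ∀ ω, Y ω = 1 ∨ Y ω = -1)
    (hYtval : ∀ ω, Ytil ω = 1 ∨ Ytil ω = -1)
    (p ep em : ℝ)
    (hp : (μ {ω | Y ω = 1}).toReal = p) (hp0 : 0 < p) (hp1 : p < 1)
    (hep : (μ {ω | Ytil ω = -1 ∧ Y ω = 1}).toReal = ep * (μ {ω | Y ω = 1}).toReal)
    (hem : (μ {ω | Ytil ω = 1 ∧ Y ω = -1}).toReal = em * (μ {ω | Y ω = -1}).toReal)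
    -- `Ỹ` is conditionally independent of `X` given `Y` (functional form)
    (hCI : ∀ (h : 𝒳 → ℝ), Integrable (fun ω => h (X ω)) μ → ∀ y y' : ℤ,
      (μ {ω | Y ω = y}).toReal * ∫ ω in {ω | Ytil ω = y' ∧ Y ω = y}, h (X ω) ∂μ
        = (μ {ω | Ytil ω = y' ∧ Y ω = y}).toReal * ∫ ω in {ω | Y ω = y}, h (X ω) ∂μ)
    (ℓ : ℝ → ℤ → ℝ) (f : 𝒳 → ℝ)
    (hInt : ∀ y : ℤ, Integrable (fun ω => ℓ (f (X ω)) y) μ) :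
    (∫ ω, ℓ (f (X ω)) (Ytil ω) ∂μ) - ∫ w, ℓ (f (X w.1)) (Ytil w.2) ∂(μ.prod μ)
      = (1 - em - ep) *
        ((∫ ω, ℓ (f (X ω)) (Y ω) ∂μ) - ∫ w, ℓ (f (X w.1)) (Y w.2) ∂(μ.prod μ)) := by
  have hY₁ : μ.real {ω | Y ω = 1} ≠ 0 := by
    rw [Measure.real, hp]
    exact hp0.ne'
  have hs : MeasurableSet {ω | Y ω = 1} := hmY (measurableSet_singleton 1)
  have hY₂ : μ.real {ω | Y ω = -1} ≠ 0 := by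
    rw [setOf_eq_neg_one_eq_compl hYval, probReal_compl_eq_one_sub hs, Measure.real, hp]
    exact sub_ne_zero.2 hp1.ne'
  have hcov : ∀ y : ℤ, covIndicator μ (fun ω => ℓ (f (X ω)) y) {ω | Ytil ω = 1} =
      (1 - em - ep) * covIndicator μ (fun ω => ℓ (f (X ω)) y) {ω | Y ω = 1} := fun y =>
    covIndicator_noisy_eq_mul hmY hmYt hYval hYtval hY₁ hY₂ hep hem (hInt y)
      (hCI (fun x => ℓ (f x) y) (hInt y) 1 1) (hCI (fun x => ℓ (f x) y) (hInt y) (-1) 1)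
  change peerRisk μ (fun y ω => ℓ (f (X ω)) y) Ytil =
    (1 - em - ep) * peerRisk μ (fun y ω => ℓ (f (X ω)) y) Y
  rw [peerRisk_eq_covIndicator_sub hmYt hYtval (hInt 1) (hInt (-1)),
    peerRisk_eq_covIndicator_sub hmY hYval (hInt 1) (hInt (-1)), hcov, hcov, mul_sub]

/-- **Lemma 2: peer loss is invariant to label noise.**
`E_D̃[ℓ_peer(f(X), Ỹ)] = (1 - em - ep) E_D[ℓ_peer(f(X), Y)]`, where the peer term is modelled
by the product measure `μ.prod μ` (two independent peer samples). -/
theorem peer_loss_stmt5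
    {Ω 𝒳 : Type*} [MeasurableSpace Ω] [MeasurableSpace 𝒳]
    (μ : Measure Ω) [IsProbabilityMeasure μ]
    (X : Ω → 𝒳) (Y Ytil : Ω → ℤ)
    (hmX : Measurable X) (hmY : Measurable Y) (hmYt : Measurable Ytil)
    (hYval : ∀ ω, Y ω = 1 ∨ Y ω = -1)
    (hYtval : ∀ ω, Ytil ω = 1 ∨ Ytil ω = -1)
    (p ep em : ℝ)
    (hp : (μ {ω | Y ω = 1}).toReal = p) (hp0 : 0 < p) (hp1 : p < 1)
    (hep : (μ {ω | Ytil ω = -1 ∧ Y ω = 1}).toReal = ep * (μ {ω | Y ω = 1}).toReal)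
    (hem : (μ {ω | Ytil ω = 1 ∧ Y ω = -1}).toReal = em * (μ {ω | Y ω = -1}).toReal)
    -- `Ỹ` is conditionally independent of `X` given `Y` (functional form)
    (hCI : ∀ (h : 𝒳 → ℝ), Integrable (fun ω => h (X ω)) μ → ∀ y y' : ℤ,
      (μ {ω | Y ω = y}).toReal * ∫ ω in {ω | Ytil ω = y' ∧ Y ω = y}, h (X ω) ∂μ
        = (μ {ω | Ytil ω = y' ∧ Y ω = y}).toReal * ∫ ω in {ω | Y ω = y}, h (X ω) ∂μ)
    (ℓ : ℝ → ℤ → ℝ) (f : 𝒳 → ℝ) (hmf : Measurable f)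
    (hInt : ∀ y : ℤ, Integrable (fun ω => ℓ (f (X ω)) y) μ) :
    (∫ ω, ℓ (f (X ω)) (Ytil ω) ∂μ) - ∫ w, ℓ (f (X w.1)) (Ytil w.2) ∂(μ.prod μ)
      = (1 - em - ep) *
        ((∫ ω, ℓ (f (X ω)) (Y ω) ∂μ) - ∫ w, ℓ (f (X w.1)) (Y w.2) ∂(μ.prod μ)) :=
  peer_loss_stmt5_general μ X Y Ytil hmY hmYt hYval hYtval p ep em hp hp0 hp1 hep hem hCI ℓ f hInt
end

section
/- For any classifier f, E_{D̃}[𝟙_peer(f(X), Ỹ)] = 2(1 − e₋₁ − e₊₁)·p(1−p)·(R₋₁(f) + R₊₁(f) − 1), where R₊₁(f) := P(f(X) = −1 | Y = +1) and R₋₁(f) := P(f(X) = +1 | Y = −1). Consequently, when e₋₁ + e₊₁ < 1, minimizing E_{D̃}[𝟙_peer(f(X), Ỹ)] is equivalent to minimizing R₋₁(f) + R₊₁(f). -/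
open MeasureTheory
open scoped symmDiff

/-! Put `A = {f(X) = 1}`, `B = {Ỹ = 1}`, `C = {Y = 1}`. For ±1-valued labels the disagreement
event is `A ∆ B`, of probability `P(A) + P(B) - 2 P(A ∩ B)`; for the independent peer pair it is
`P(A) + P(B) - 2 P(A) P(B)`. The peer risk is thus `-2 (P(A ∩ B) - P(A) P(B))`, and when `A` and
`B` are independent given `C` and given `Cᶜ` this covariance is
`p (1 - p) (P(A | C) - P(A | Cᶜ)) (P(B | C) - P(B | Cᶜ))`, where
`P(A | C) - P(A | Cᶜ) = 1 - R₊₁ - R₋₁` and `P(B | C) - P(B | Cᶜ) = 1 - e₊₁ - e₋₁`. -/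

section PlusMinusOne

variable {α : Type*} {F G : α → ℤ}

lemma setOf_eq_neg_one_eq_compl_s8 (hF : ∀ a, F a = 1 ∨ F a = -1) :
    {a | F a = -1} = {a | F a = 1}ᶜ := by
  ext a
  rcases hF a with h | h <;> simp [h]

lemma setOf_ne_eq_symmDiff (hF : ∀ a, F a = 1 ∨ F a = -1) (hG : ∀ a, G a = 1 ∨ G a = -1) :
    {a | F a ≠ G a} = {a | F a = 1} ∆ {a | G a = 1} := by
  ext a
  rcases hF a with h | h <;> rcases hG a with h' | h' <;> simp [Set.mem_symmDiff, h, h']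

end PlusMinusOne

section

variable {Ω Ω' : Type*} [MeasurableSpace Ω] [MeasurableSpace Ω']

lemma measureReal_symmDiff_eq_add_sub_inter {μ : Measure Ω} [IsFiniteMeasure μ] {s t : Set Ω}
    (hs : MeasurableSet s) (ht : MeasurableSet t) :
    μ.real (s ∆ t) = μ.real s + μ.real t - 2 * μ.real (s ∩ t) := by
  have hst := measureReal_inter_add_sdiff (μ := μ) (s := s) ht
  have hts := measureReal_inter_add_sdiff (μ := μ) (s := t) hs
  rw [measureReal_symmDiff_eq hs ht, Set.inter_comm t s] at *
  linarith

lemma measureReal_prod_symmDiff_preimage_fst_snd (μ : Measure Ω) (ν : Measure Ω')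
    [IsProbabilityMeasure μ] [IsProbabilityMeasure ν] {s : Set Ω} {t : Set Ω'}
    (hs : MeasurableSet s) (ht : MeasurableSet t) :
    (μ.prod ν).real ((Prod.fst ⁻¹' s) ∆ (Prod.snd ⁻¹' t))
      = μ.real s + ν.real t - 2 * (μ.real s * ν.real t) := by
  rw [measureReal_symmDiff_eq_add_sub_inter (measurable_fst hs) (measurable_snd ht),
    ← Set.prod_eq, ← Set.prod_univ, ← Set.univ_prod, measureReal_prod_prod,
    measureReal_prod_prod, measureReal_prod_prod, probReal_univ, probReal_univ, mul_one, one_mul]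

lemma measureReal_inter_sub_mul_eq_of_condIndep_s8 {μ : Measure Ω} [IsProbabilityMeasure μ]
    {A B C : Set Ω} (hC : MeasurableSet C) (hC₁ : μ.real C ≠ 0) (hC₀ : μ.real Cᶜ ≠ 0)
    (h₁ : μ.real C * μ.real (A ∩ (B ∩ C)) = μ.real (A ∩ C) * μ.real (B ∩ C))
    (h₀ : μ.real Cᶜ * μ.real (A ∩ (B ∩ Cᶜ)) = μ.real (A ∩ Cᶜ) * μ.real (B ∩ Cᶜ)) :
    μ.real (A ∩ B) - μ.real A * μ.real B
      = μ.real C * μ.real Cᶜ * (μ.real (A ∩ C) / μ.real C - μ.real (A ∩ Cᶜ) / μ.real Cᶜ)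
        * (μ.real (B ∩ C) / μ.real C - μ.real (B ∩ Cᶜ) / μ.real Cᶜ) := by
  have split (s : Set Ω) : μ.real s = μ.real (s ∩ C) + μ.real (s ∩ Cᶜ) := by
    rw [← Set.sdiff_eq, measureReal_inter_add_sdiff (s := s) hC]
  have hCC := probReal_add_probReal_compl (μ := μ) hC
  rw [split (A ∩ B), split A, split B, Set.inter_assoc, Set.inter_assoc]
  field_simp
  set c := μ.real C
  set d := μ.real Cᶜ
  linear_combination (d ^ 2 + c * d) * h₁ + (c ^ 2 + c * d) * h₀
    - c * d * (μ.real (A ∩ (B ∩ C)) + μ.real (A ∩ (B ∩ Cᶜ))) * hCC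

lemma measureReal_symmDiff_sub_prod_eq_of_condIndep {μ : Measure Ω} [IsProbabilityMeasure μ]
    {A B C : Set Ω} (hA : MeasurableSet A) (hB : MeasurableSet B) (hC : MeasurableSet C)
    (hC₁ : μ.real C ≠ 0) (hC₀ : μ.real Cᶜ ≠ 0)
    (h₁ : μ.real C * μ.real (A ∩ (B ∩ C)) = μ.real (A ∩ C) * μ.real (B ∩ C))
    (h₀ : μ.real Cᶜ * μ.real (A ∩ (B ∩ Cᶜ)) = μ.real (A ∩ Cᶜ) * μ.real (B ∩ Cᶜ))
    {ep em : ℝ} (hep : μ.real (Bᶜ ∩ C) = ep * μ.real C)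
    (hem : μ.real (B ∩ Cᶜ) = em * μ.real Cᶜ) :
    μ.real (A ∆ B) - (μ.prod μ).real ((Prod.fst ⁻¹' A) ∆ (Prod.snd ⁻¹' B))
      = 2 * (1 - em - ep) * (μ.real C * μ.real Cᶜ)
        * (μ.real (A ∩ Cᶜ) / μ.real Cᶜ + μ.real (Aᶜ ∩ C) / μ.real C - 1) := by
  have hcov := measureReal_inter_sub_mul_eq_of_condIndep_s8 hC hC₁ hC₀ h₁ h₀
  have hBC : μ.real (B ∩ C) = (1 - ep) * μ.real C := by
    have := measureReal_inter_add_sdiff (μ := μ) (s := C) hB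
    rw [Set.sdiff_eq, Set.inter_comm, Set.inter_comm C, hep] at this
    linarith
  have hAC : μ.real (Aᶜ ∩ C) = μ.real C - μ.real (A ∩ C) := by
    have := measureReal_inter_add_sdiff (μ := μ) (s := C) hA
    rw [Set.sdiff_eq, Set.inter_comm, Set.inter_comm C] at this
    linarith
  rw [hBC, hem] at hcov
  rw [measureReal_symmDiff_eq_add_sub_inter hA hB,
    measureReal_prod_symmDiff_preimage_fst_snd μ μ hA hB, hAC]
  field_simp at hcov ⊢
  linear_combination (-2) * hcov

end

/-- **Lemma 3.**  The expected 0-1 peer risk over the noisy distribution equals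
`2 (1 - em - ep) p (1-p) (R₋₁(f) + R₊₁(f) - 1)`, where `R₊₁(f) = P(f(X) = -1 | Y = 1)` and
`R₋₁(f) = P(f(X) = 1 | Y = -1)`; consequently, when `em + ep < 1`, minimizing the noisy expected
0-1 peer risk is equivalent to minimizing `R₋₁(f) + R₊₁(f)`. -/
theorem peer_loss_stmt8
    {Ω 𝒳 : Type*} [MeasurableSpace Ω] [MeasurableSpace 𝒳]
    (μ : Measure Ω) [IsProbabilityMeasure μ]
    (X : Ω → 𝒳) (Y Ytil : Ω → ℤ)
    (hmX : Measurable X) (hmY : Measurable Y) (hmYt : Measurable Ytil)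
    (hYval : ∀ ω, Y ω = 1 ∨ Y ω = -1)
    (hYtval : ∀ ω, Ytil ω = 1 ∨ Ytil ω = -1)
    (ep em : ℝ)
    (p : ℝ) (hp : (μ {ω | Y ω = 1}).toReal = p) (hp0 : 0 < p) (hp1 : p < 1)
    (hep : (μ {ω | Ytil ω = -1 ∧ Y ω = 1}).toReal = ep * (μ {ω | Y ω = 1}).toReal)
    (hem : (μ {ω | Ytil ω = 1 ∧ Y ω = -1}).toReal = em * (μ {ω | Y ω = -1}).toReal)
    -- `Ỹ` is conditionally independent of `X` given `Y`
    (hCI : ∀ (A : Set 𝒳) (y y' : ℤ),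
      (μ {ω | Y ω = y}).toReal * (μ {ω | X ω ∈ A ∧ Ytil ω = y' ∧ Y ω = y}).toReal
        = (μ {ω | X ω ∈ A ∧ Y ω = y}).toReal * (μ {ω | Ytil ω = y' ∧ Y ω = y}).toReal)
 :
    (∀ f : 𝒳 → ℤ, Measurable f → (∀ x, f x = 1 ∨ f x = -1) →
      (μ {ω | f (X ω) ≠ Ytil ω}).toReal - ((μ.prod μ) {w | f (X w.1) ≠ Ytil w.2}).toReal
        = 2 * (1 - em - ep) * (p * (1 - p)) *
            ((μ {ω | f (X ω) = 1 ∧ Y ω = -1}).toReal / (μ {ω | Y ω = -1}).toReal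
              + (μ {ω | f (X ω) = -1 ∧ Y ω = 1}).toReal / (μ {ω | Y ω = 1}).toReal - 1))
    ∧ (em + ep < 1 →
        ∀ f g : 𝒳 → ℤ, Measurable f → (∀ x, f x = 1 ∨ f x = -1) →
          Measurable g → (∀ x, g x = 1 ∨ g x = -1) →
          ((μ {ω | f (X ω) ≠ Ytil ω}).toReal
              - ((μ.prod μ) {w | f (X w.1) ≠ Ytil w.2}).toReal
            ≤ (μ {ω | g (X ω) ≠ Ytil ω}).toReal
              - ((μ.prod μ) {w | g (X w.1) ≠ Ytil w.2}).toReal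
          ↔ (μ {ω | f (X ω) = 1 ∧ Y ω = -1}).toReal / (μ {ω | Y ω = -1}).toReal
              + (μ {ω | f (X ω) = -1 ∧ Y ω = 1}).toReal / (μ {ω | Y ω = 1}).toReal
            ≤ (μ {ω | g (X ω) = 1 ∧ Y ω = -1}).toReal / (μ {ω | Y ω = -1}).toReal
              + (μ {ω | g (X ω) = -1 ∧ Y ω = 1}).toReal / (μ {ω | Y ω = 1}).toReal)) := by
  simp only [← measureReal_def] at hp hep hem hCI ⊢
  have hC : MeasurableSet {ω | Y ω = 1} := hmY (measurableSet_singleton 1)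
  have hCc : {ω | Y ω = -1} = {ω | Y ω = 1}ᶜ := setOf_eq_neg_one_eq_compl_s8 hYval
  have hq : μ.real {ω | Y ω = 1}ᶜ = 1 - p := by rw [probReal_compl_eq_one_sub hC, hp]
  simp only [Set.ofPred_and, hCc, setOf_eq_neg_one_eq_compl_s8 hYtval] at hep hem
  have key : ∀ f : 𝒳 → ℤ, Measurable f → (∀ x, f x = 1 ∨ f x = -1) →
      μ.real {ω | f (X ω) ≠ Ytil ω} - (μ.prod μ).real {w | f (X w.1) ≠ Ytil w.2}
        = 2 * (1 - em - ep) * (p * (1 - p)) *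
            (μ.real {ω | f (X ω) = 1 ∧ Y ω = -1} / μ.real {ω | Y ω = -1}
              + μ.real {ω | f (X ω) = -1 ∧ Y ω = 1} / μ.real {ω | Y ω = 1} - 1) := by
    intro f hf hfval
    have h₀ := hCI {x | f x = 1} (-1) 1
    simp only [Set.ofPred_and, Set.mem_ofPred_eq, hCc] at h₀
    rw [setOf_ne_eq_symmDiff (fun ω ↦ hfval (X ω)) hYtval,
      setOf_ne_eq_symmDiff (fun w ↦ hfval (X w.1)) (fun w ↦ hYtval w.2)]
    simp only [Set.ofPred_and, hCc, setOf_eq_neg_one_eq_compl_s8 (fun ω ↦ hfval (X ω))]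
    rw [← hq, ← hp]
    exact measureReal_symmDiff_sub_prod_eq_of_condIndep
      ((hf.comp hmX) (measurableSet_singleton 1)) (hmYt (measurableSet_singleton 1)) hC
      (hp ▸ hp0.ne') (hq ▸ (sub_pos.2 hp1).ne') (hCI {x | f x = 1} 1 1) h₀ hep hem
  refine ⟨key, fun hlt f g hfm hfv hgm hgv ↦ ?_⟩
  have hc : 0 < 2 * (1 - em - ep) * (p * (1 - p)) := by
    have : 0 < 1 - em - ep := by linarith
    have : 0 < 1 - p := by linarith
    positivity
  rw [key f hfm hfv, key g hgm hgv, mul_le_mul_iff_right₀ hc, sub_le_sub_iff_right]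
end

section
/- Suppose e₋₁ + e₊₁ < 1, δ_{p̃} := P(Ỹ = +1) − P(Ỹ = −1) ≠ 0, and α* := 1 − (1 − e₋₁ − e₊₁)·δ_p/δ_{p̃} with δ_p := P(Y = +1) − P(Y = −1). Then there exists a constant c > 0 such that for any two classifiers f, f′: E_{D̃}[𝟙_{α*-peer}(f(X), Ỹ)] − E_{D̃}[𝟙_{α*-peer}(f′(X), Ỹ)] = c·(1 − e₋₁ − e₊₁)·(R_D(f) − R_D(f′)). -/
/-! For a ±1-valued classifier `g = f ∘ X` every error probability is affine in `P(g = 1)` and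
`P(g = 1, Y = 1)`. The clean risk is `P(g = 1) + P(Y = 1) - 2 P(g = 1, Y = 1)`; the noisy risk is
`P(g = 1) + P(Ỹ = 1) - 2 P(g = 1, Ỹ = 1)`, where conditional independence of `Ỹ` and `X` given
`Y` gives `P(g = 1, Ỹ = 1) = (1 - ep) P(g = 1, Y = 1) + em P(g = 1, Y = -1)`; and the peer term,
computed under the product measure, is `P(g = 1) + P(Ỹ = 1) - 2 P(g = 1) P(Ỹ = 1)`.
The weight `α*` is exactly the one with `α* δ_p̃ = em - ep`, so subtracting `α*` times the peer
term cancels the dependence on `P(g = 1)` that the noise introduces. What is left is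
`(1 - em - ep)` times the clean risk plus a constant independent of `f`, whence `c = 1`. -/

open MeasureTheory

open scoped symmDiff

section PlusMinusOne

variable {α β : Type*}

lemma setOf_eq_neg_one_eq_compl_s10 {Z : α → ℤ} (hZ : ∀ a, Z a = 1 ∨ Z a = -1) :
    {a | Z a = -1} = {a | Z a = 1}ᶜ := by
  ext a
  rcases hZ a with h | h <;> simp [h]

lemma setOf_ne_eq_symmDiff_s10 {U V : α → ℤ} (hU : ∀ a, U a = 1 ∨ U a = -1)
    (hV : ∀ a, V a = 1 ∨ V a = -1) :
    {a | U a ≠ V a} = {a | U a = 1} ∆ {a | V a = 1} := by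
  ext a
  rcases hU a with h | h <;> rcases hV a with h' | h' <;> simp [Set.mem_symmDiff, h, h']

variable [MeasurableSpace α] [MeasurableSpace β]

lemma measureReal_setOf_ne {μ : Measure α} [IsFiniteMeasure μ] {U V : α → ℤ}
    (hmU : Measurable U) (hmV : Measurable V) (hU : ∀ a, U a = 1 ∨ U a = -1)
    (hV : ∀ a, V a = 1 ∨ V a = -1) :
    μ.real {a | U a ≠ V a} = μ.real {a | U a = 1} + μ.real {a | V a = 1}
      - 2 * μ.real ({a | U a = 1} ∩ {a | V a = 1}) := by
  have hs : MeasurableSet {a | U a = 1} := hmU (measurableSet_singleton 1)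
  have ht : MeasurableSet {a | V a = 1} := hmV (measurableSet_singleton 1)
  have hst := measureReal_sdiff_add_inter (μ := μ) (s := {a | U a = 1}) ht
  have hts := measureReal_sdiff_add_inter (μ := μ) (s := {a | V a = 1}) hs
  rw [Set.inter_comm] at hts
  rw [setOf_ne_eq_symmDiff_s10 hU hV, measureReal_symmDiff_eq hs ht]
  linarith

lemma measureReal_prod_setOf_ne {μ : Measure α} {ν : Measure β} [IsProbabilityMeasure μ]
    [IsProbabilityMeasure ν] {U : α → ℤ} {V : β → ℤ}
    (hmU : Measurable U) (hmV : Measurable V) (hU : ∀ a, U a = 1 ∨ U a = -1)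
    (hV : ∀ b, V b = 1 ∨ V b = -1) :
    (μ.prod ν).real {w | U w.1 ≠ V w.2} = μ.real {a | U a = 1} + ν.real {b | V b = 1}
      - 2 * (μ.real {a | U a = 1} * ν.real {b | V b = 1}) := by
  have hfst : {w : α × β | U w.1 = 1} = {a | U a = 1} ×ˢ Set.univ := by ext; simp
  have hsnd : {w : α × β | V w.2 = 1} = Set.univ ×ˢ {b | V b = 1} := by ext; simp
  have h := measureReal_setOf_ne (μ := μ.prod ν) (hmU.comp measurable_fst)
    (hmV.comp measurable_snd) (fun w => hU w.1) (fun w => hV w.2)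
  simp only [Function.comp_apply] at h
  rw [h, hfst, hsnd, Set.prod_inter_prod, Set.inter_univ, Set.univ_inter]
  simp only [measureReal_prod_prod, probReal_univ, mul_one, one_mul]


lemma measureReal_inter_add_inter_neg_one {μ : Measure α} [IsFiniteMeasure μ] {Z : α → ℤ}
    (hmZ : Measurable Z) (hZ : ∀ a, Z a = 1 ∨ Z a = -1) (s : Set α) :
    μ.real (s ∩ {a | Z a = 1}) + μ.real (s ∩ {a | Z a = -1}) = μ.real s := by
  rw [setOf_eq_neg_one_eq_compl_s10 hZ, ← Set.sdiff_eq]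
  exact measureReal_inter_add_sdiff (hmZ (measurableSet_singleton 1))

lemma measureReal_neg_one_eq {μ : Measure α} [IsProbabilityMeasure μ] {Z : α → ℤ}
    (hmZ : Measurable Z) (hZ : ∀ a, Z a = 1 ∨ Z a = -1) :
    μ.real {a | Z a = -1} = 1 - μ.real {a | Z a = 1} := by
  have hs : MeasurableSet {a | Z a = 1} := hmZ (measurableSet_singleton 1)
  rw [setOf_eq_neg_one_eq_compl_s10 hZ, probReal_compl_eq_one_sub hs]

end PlusMinusOne

section NoisyLabels

variable {Ω 𝒳 : Type*} [MeasurableSpace Ω] {μ : Measure Ω} [IsProbabilityMeasure μ]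
  {X : Ω → 𝒳} {Y Ytil : Ω → ℤ} {ep em : ℝ}

lemma measureReal_preimage_inter_noisy_eq (hmY : Measurable Y) (hmYt : Measurable Ytil)
    (hYval : ∀ ω, Y ω = 1 ∨ Y ω = -1) (hYtval : ∀ ω, Ytil ω = 1 ∨ Ytil ω = -1)
    (hp0 : 0 < μ.real {ω | Y ω = 1}) (hp1 : μ.real {ω | Y ω = 1} < 1)
    (hep : μ.real ({ω | Ytil ω = -1} ∩ {ω | Y ω = 1}) = ep * μ.real {ω | Y ω = 1})
    (hem : μ.real ({ω | Ytil ω = 1} ∩ {ω | Y ω = -1}) = em * μ.real {ω | Y ω = -1})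
    (hCI : ∀ (A : Set 𝒳) (y y' : ℤ),
      μ.real {ω | Y ω = y} * μ.real (X ⁻¹' A ∩ ({ω | Ytil ω = y'} ∩ {ω | Y ω = y}))
        = μ.real (X ⁻¹' A ∩ {ω | Y ω = y}) * μ.real ({ω | Ytil ω = y'} ∩ {ω | Y ω = y}))
    (A : Set 𝒳) :
    μ.real (X ⁻¹' A ∩ {ω | Ytil ω = 1}) =
      (1 - ep) * μ.real (X ⁻¹' A ∩ {ω | Y ω = 1})
        + em * μ.real (X ⁻¹' A ∩ {ω | Y ω = -1}) := by
  have hm0 : 0 < μ.real {ω | Y ω = -1} := by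
    rw [measureReal_neg_one_eq hmY hYval]; linarith
  have hkeep : μ.real ({ω | Ytil ω = 1} ∩ {ω | Y ω = 1}) = (1 - ep) * μ.real {ω | Y ω = 1} := by
    have h := measureReal_inter_add_inter_neg_one (μ := μ) hmYt hYtval {ω | Y ω = 1}
    rw [Set.inter_comm, Set.inter_comm {ω | Y ω = 1}] at h
    linarith
  have h₁ : μ.real (X ⁻¹' A ∩ ({ω | Ytil ω = 1} ∩ {ω | Y ω = 1}))
      = (1 - ep) * μ.real (X ⁻¹' A ∩ {ω | Y ω = 1}) :=
    mul_left_cancel₀ hp0.ne' (by rw [hCI A 1 1, hkeep]; ring)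
  have h₂ : μ.real (X ⁻¹' A ∩ ({ω | Ytil ω = 1} ∩ {ω | Y ω = -1}))
      = em * μ.real (X ⁻¹' A ∩ {ω | Y ω = -1}) :=
    mul_left_cancel₀ hm0.ne' (by rw [hCI A (-1) 1, hem]; ring)
  rw [← measureReal_inter_add_inter_neg_one hmY hYval, Set.inter_assoc, Set.inter_assoc, h₁, h₂]

lemma measureReal_noisy_sub_peer_eq [MeasurableSpace 𝒳] (hmX : Measurable X)
    (hmY : Measurable Y) (hmYt : Measurable Ytil)
    (hYval : ∀ ω, Y ω = 1 ∨ Y ω = -1) (hYtval : ∀ ω, Ytil ω = 1 ∨ Ytil ω = -1)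
    (hp0 : 0 < μ.real {ω | Y ω = 1}) (hp1 : μ.real {ω | Y ω = 1} < 1)
    (hep : μ.real ({ω | Ytil ω = -1} ∩ {ω | Y ω = 1}) = ep * μ.real {ω | Y ω = 1})
    (hem : μ.real ({ω | Ytil ω = 1} ∩ {ω | Y ω = -1}) = em * μ.real {ω | Y ω = -1})
    (hCI : ∀ (A : Set 𝒳) (y y' : ℤ),
      μ.real {ω | Y ω = y} * μ.real (X ⁻¹' A ∩ ({ω | Ytil ω = y'} ∩ {ω | Y ω = y}))
        = μ.real (X ⁻¹' A ∩ {ω | Y ω = y}) * μ.real ({ω | Ytil ω = y'} ∩ {ω | Y ω = y}))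
    {α : ℝ} (hα : α * (μ.real {ω | Ytil ω = 1} - μ.real {ω | Ytil ω = -1}) = em - ep)
    {f : 𝒳 → ℤ} (hmf : Measurable f) (hf : ∀ x, f x = 1 ∨ f x = -1) :
    μ.real {ω | f (X ω) ≠ Ytil ω} - α * (μ.prod μ).real {w | f (X w.1) ≠ Ytil w.2}
      = (1 - em - ep) * μ.real {ω | f (X ω) ≠ Y ω}
        + ((1 - α) * μ.real {ω | Ytil ω = 1} - (1 - em - ep) * μ.real {ω | Y ω = 1}) := by
  have hmfX : Measurable (fun ω => f (X ω)) := hmf.comp hmX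
  have hfX : ∀ ω, f (X ω) = 1 ∨ f (X ω) = -1 := fun ω => hf (X ω)
  have hclean := measureReal_setOf_ne (μ := μ) hmfX hmY hfX hYval
  have hnoisy := measureReal_setOf_ne (μ := μ) hmfX hmYt hfX hYtval
  have hpeer := measureReal_prod_setOf_ne (μ := μ) (ν := μ) hmfX hmYt hfX hYtval
  have hagree : μ.real ({ω | f (X ω) = 1} ∩ {ω | Ytil ω = 1})
      = (1 - ep) * μ.real ({ω | f (X ω) = 1} ∩ {ω | Y ω = 1})
        + em * μ.real ({ω | f (X ω) = 1} ∩ {ω | Y ω = -1}) :=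
    measureReal_preimage_inter_noisy_eq hmY hmYt hYval hYtval hp0 hp1 hep hem hCI (f ⁻¹' {1})
  have hsplit := measureReal_inter_add_inter_neg_one (μ := μ) hmY hYval {ω | f (X ω) = 1}
  rw [measureReal_neg_one_eq hmYt hYtval] at hα
  rw [hclean, hnoisy, hpeer, hagree]
  linear_combination (-2 * em) * hsplit + μ.real {ω | f (X ω) = 1} * hα

end NoisyLabels

theorem peer_loss_stmt10_general
    {Ω 𝒳 : Type*} [MeasurableSpace Ω] [MeasurableSpace 𝒳]
    (μ : Measure Ω) [IsProbabilityMeasure μ]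
    (X : Ω → 𝒳) (Y Ytil : Ω → ℤ)
    (hmX : Measurable X) (hmY : Measurable Y) (hmYt : Measurable Ytil)
    (hYval : ∀ ω, Y ω = 1 ∨ Y ω = -1)
    (hYtval : ∀ ω, Ytil ω = 1 ∨ Ytil ω = -1)
    (ep em : ℝ)
    (p : ℝ) (hp : (μ {ω | Y ω = 1}).toReal = p) (hp0 : 0 < p) (hp1 : p < 1)
    (hep : (μ {ω | Ytil ω = -1 ∧ Y ω = 1}).toReal = ep * (μ {ω | Y ω = 1}).toReal)
    (hem : (μ {ω | Ytil ω = 1 ∧ Y ω = -1}).toReal = em * (μ {ω | Y ω = -1}).toReal)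
    -- `Ỹ` is conditionally independent of `X` given `Y`
    (hCI : ∀ (A : Set 𝒳) (y y' : ℤ),
      (μ {ω | Y ω = y}).toReal * (μ {ω | X ω ∈ A ∧ Ytil ω = y' ∧ Y ω = y}).toReal
        = (μ {ω | X ω ∈ A ∧ Y ω = y}).toReal * (μ {ω | Ytil ω = y' ∧ Y ω = y}).toReal)
    (hδ : (μ {ω | Ytil ω = 1}).toReal - (μ {ω | Ytil ω = -1}).toReal ≠ 0)
    (α : ℝ)
    (hα : α = 1 - (1 - em - ep) *
      (((μ {ω | Y ω = 1}).toReal - (μ {ω | Y ω = -1}).toReal)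
        / ((μ {ω | Ytil ω = 1}).toReal - (μ {ω | Ytil ω = -1}).toReal))) :
    ∃ c : ℝ, 0 < c ∧
      ∀ f f' : 𝒳 → ℤ, Measurable f → (∀ x, f x = 1 ∨ f x = -1) →
        Measurable f' → (∀ x, f' x = 1 ∨ f' x = -1) →
        ((μ {ω | f (X ω) ≠ Ytil ω}).toReal
            - α * ((μ.prod μ) {w | f (X w.1) ≠ Ytil w.2}).toReal)
          - ((μ {ω | f' (X ω) ≠ Ytil ω}).toReal
              - α * ((μ.prod μ) {w | f' (X w.1) ≠ Ytil w.2}).toReal)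
        = c * (1 - em - ep) *
            ((μ {ω | f (X ω) ≠ Y ω}).toReal - (μ {ω | f' (X ω) ≠ Y ω}).toReal) := by
  subst hp
  simp only [← measureReal_def] at *
  -- `hep`, `hem` and `hCI` describe `{ω | P ω ∧ Q ω}`, definitionally the intersections below.
  have hT : μ.real {ω | Ytil ω = 1}
      = (1 - ep) * μ.real {ω | Y ω = 1} + em * (1 - μ.real {ω | Y ω = 1}) := by
    rw [← measureReal_neg_one_eq hmY hYval]
    simpa only [Set.preimage_univ, Set.univ_inter] using
      measureReal_preimage_inter_noisy_eq hmY hmYt hYval hYtval hp0 hp1 hep hem hCI Set.univ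
  have hαδ : α * (μ.real {ω | Ytil ω = 1} - μ.real {ω | Ytil ω = -1}) = em - ep := by
    rw [measureReal_neg_one_eq hmYt hYtval] at hδ ⊢
    rw [hα, measureReal_neg_one_eq hmYt hYtval, measureReal_neg_one_eq hmY hYval]
    field_simp
    rw [hT]
    ring
  have hkey := fun f => measureReal_noisy_sub_peer_eq (f := f) hmX hmY hmYt hYval hYtval hp0 hp1
    hep hem hCI hαδ
  refine ⟨1, one_pos, fun f f' hmf hf hmf' hf' => ?_⟩
  rw [hkey f hmf hf, hkey f' hmf' hf']
  ring

/-- **Proposition 1.**  With `α* = 1 - (1 - em - ep) δ_p / δ_p̃`, there is a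
constant `c > 0` such that for any two classifiers `f, f'`, the difference of noisy expected
`α*`-weighted 0-1 peer risks is `c (1 - em - ep) (R_D(f) - R_D(f'))`. -/
theorem peer_loss_stmt10
    {Ω 𝒳 : Type*} [MeasurableSpace Ω] [MeasurableSpace 𝒳]
    (μ : Measure Ω) [IsProbabilityMeasure μ]
    (X : Ω → 𝒳) (Y Ytil : Ω → ℤ)
    (hmX : Measurable X) (hmY : Measurable Y) (hmYt : Measurable Ytil)
    (hYval : ∀ ω, Y ω = 1 ∨ Y ω = -1)
    (hYtval : ∀ ω, Ytil ω = 1 ∨ Ytil ω = -1)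
    (ep em : ℝ)
    (p : ℝ) (hp : (μ {ω | Y ω = 1}).toReal = p) (hp0 : 0 < p) (hp1 : p < 1)
    (hep : (μ {ω | Ytil ω = -1 ∧ Y ω = 1}).toReal = ep * (μ {ω | Y ω = 1}).toReal)
    (hem : (μ {ω | Ytil ω = 1 ∧ Y ω = -1}).toReal = em * (μ {ω | Y ω = -1}).toReal)
    -- `Ỹ` is conditionally independent of `X` given `Y`
    (hCI : ∀ (A : Set 𝒳) (y y' : ℤ),
      (μ {ω | Y ω = y}).toReal * (μ {ω | X ω ∈ A ∧ Ytil ω = y' ∧ Y ω = y}).toReal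
        = (μ {ω | X ω ∈ A ∧ Y ω = y}).toReal * (μ {ω | Ytil ω = y' ∧ Y ω = y}).toReal)
    (he : em + ep < 1)
    (hδ : (μ {ω | Ytil ω = 1}).toReal - (μ {ω | Ytil ω = -1}).toReal ≠ 0)
    (α : ℝ)
    (hα : α = 1 - (1 - em - ep) *
      (((μ {ω | Y ω = 1}).toReal - (μ {ω | Y ω = -1}).toReal)
        / ((μ {ω | Ytil ω = 1}).toReal - (μ {ω | Ytil ω = -1}).toReal))) :
    ∃ c : ℝ, 0 < c ∧
      ∀ f f' : 𝒳 → ℤ, Measurable f → (∀ x, f x = 1 ∨ f x = -1) →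
        Measurable f' → (∀ x, f' x = 1 ∨ f' x = -1) →
        ((μ {ω | f (X ω) ≠ Ytil ω}).toReal
            - α * ((μ.prod μ) {w | f (X w.1) ≠ Ytil w.2}).toReal)
          - ((μ {ω | f' (X ω) ≠ Ytil ω}).toReal
              - α * ((μ.prod μ) {w | f' (X w.1) ≠ Ytil w.2}).toReal)
        = c * (1 - em - ep) *
            ((μ {ω | f (X ω) ≠ Y ω}).toReal - (μ {ω | f' (X ω) ≠ Y ω}).toReal) :=
  peer_loss_stmt10_general μ X Y Ytil hmX hmY hmYt hYval hYtval ep em p hp hp0 hp1 hep hem hCI hδ α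
    hα
end

section
/- Define p̃_{+1} := p(1 − e₊₁) + (1−p)·e₋₁ and p̃_{−1} := (1−p)(1 − e₋₁) + p·e₊₁ (the marginal probabilities of the noisy label), and write e_Y for e₊₁ when Y = +1 and e₋₁ when Y = −1, similarly p̃_Y. Then for any classifier f, loss ℓ : ℝ × {−1,+1} → ℝ, and α ≥ 0: E[ℓ_{α-peer}(f(X), Ỹ)] = E_{(X,Y)∼D}[(1 − e_Y − α·p̃_Y)·ℓ(f(X), Y) + (e_Y − α·(1 − p̃_Y))·ℓ(f(X), −Y)]. -/
/-!
On each clean class `{Y = y}` the noisy label equals `y` or `-y`, and conditional independence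
turns the integral of `ℓ(f X, Ỹ)` over that class into `(1 - e_y) ∫ ℓ(f X, y) + e_y ∫ ℓ(f X, -y)`;
summing over the two classes gives the noisy risk as a clean expectation. The peer term factorises
over the product measure into `p̃₊ E ℓ(f X, 1) + p̃₋ E ℓ(f X, -1)`, and since `p̃₊ + p̃₋ = 1` this is
`E[p̃_Y ℓ(f X, Y) + (1 - p̃_Y) ℓ(f X, -Y)]` whatever the value of `Y`.
-/

open MeasureTheory Set

section TwoValued

variable {Ω : Type*} {Z : Ω → ℤ} {a b : ℤ}

theorem comp_eq_indicator_add_indicator_of_two_valued (hval : ∀ ω, Z ω = a ∨ Z ω = b)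
    (hab : a ≠ b) (G : ℤ → Ω → ℝ) :
    (fun ω => G (Z ω) ω) = {ω | Z ω = a}.indicator (G a) + {ω | Z ω = b}.indicator (G b) := by
  funext ω
  rcases hval ω with h | h <;> simp [h, hab, hab.symm]

variable [MeasurableSpace Ω] {μ : Measure Ω}

theorem integrable_comp_of_two_valued (hZ : Measurable Z) (hval : ∀ ω, Z ω = a ∨ Z ω = b)
    (hab : a ≠ b) {G : ℤ → Ω → ℝ} (ha : Integrable (G a) μ) (hb : Integrable (G b) μ) :
    Integrable (fun ω => G (Z ω) ω) μ := by
  rw [comp_eq_indicator_add_indicator_of_two_valued hval hab G]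
  exact (ha.indicator (measurableSet_eq_fun hZ measurable_const)).add
    (hb.indicator (measurableSet_eq_fun hZ measurable_const))

theorem integral_comp_of_two_valued (hZ : Measurable Z) (hval : ∀ ω, Z ω = a ∨ Z ω = b)
    (hab : a ≠ b) {G : ℤ → Ω → ℝ} (ha : Integrable (G a) μ) (hb : Integrable (G b) μ) :
    ∫ ω, G (Z ω) ω ∂μ = ∫ ω in {ω | Z ω = a}, G a ω ∂μ + ∫ ω in {ω | Z ω = b}, G b ω ∂μ := by
  have hsa : MeasurableSet {ω | Z ω = a} := measurableSet_eq_fun hZ measurable_const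
  have hsb : MeasurableSet {ω | Z ω = b} := measurableSet_eq_fun hZ measurable_const
  rw [comp_eq_indicator_add_indicator_of_two_valued hval hab G,
    integral_add' (ha.indicator hsa) (hb.indicator hsb), integral_indicator hsa,
    integral_indicator hsb]

theorem measureReal_inter_add_inter_of_two_valued [IsFiniteMeasure μ] (hZ : Measurable Z)
    (hval : ∀ ω, Z ω = a ∨ Z ω = b) (hab : a ≠ b) (s : Set Ω) :
    μ.real (s ∩ {ω | Z ω = a}) + μ.real (s ∩ {ω | Z ω = b}) = μ.real s := by
  have hcompl : s ∩ {ω | Z ω = b} = s \ {ω | Z ω = a} := by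
    ext ω
    rcases hval ω with h | h <;> simp [h, hab, hab.symm]
  rw [hcompl, measureReal_inter_add_sdiff (measurableSet_eq_fun hZ measurable_const)]

theorem setIntegral_comp_of_condIndep [IsFiniteMeasure μ] {A : Set Ω} (hZ : Measurable Z)
    (hval : ∀ ω, Z ω = a ∨ Z ω = b) (hab : a ≠ b) {g : ℤ → Ω → ℝ}
    (hga : Integrable (g a) μ) (hgb : Integrable (g b) μ) {e : ℝ} (hA0 : μ.real A ≠ 0)
    (hflip : μ.real ({ω | Z ω = b} ∩ A) = e * μ.real A)
    (hCI : ∀ z, μ.real A * ∫ ω in {ω | Z ω = z} ∩ A, g z ω ∂μ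
      = μ.real ({ω | Z ω = z} ∩ A) * ∫ ω in A, g z ω ∂μ) :
    ∫ ω in A, g (Z ω) ω ∂μ = ∫ ω in A, ((1 - e) * g a ω + e * g b ω) ∂μ := by
  have hstay : μ.real ({ω | Z ω = a} ∩ A) = (1 - e) * μ.real A := by
    have := measureReal_inter_add_inter_of_two_valued (μ := μ) hZ hval hab A
    rw [inter_comm A, inter_comm A, hflip] at this
    linarith
  have hcell : ∀ z r, μ.real ({ω | Z ω = z} ∩ A) = r * μ.real A →
      ∫ ω in {ω | Z ω = z} ∩ A, g z ω ∂μ = r * ∫ ω in A, g z ω ∂μ := fun z r hr =>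
    mul_left_cancel₀ hA0 (by rw [hCI, hr]; ring)
  rw [integral_comp_of_two_valued hZ hval hab hga.restrict hgb.restrict,
    Measure.restrict_restrict (measurableSet_eq_fun hZ measurable_const),
    Measure.restrict_restrict (measurableSet_eq_fun hZ measurable_const),
    hcell a _ hstay, hcell b _ hflip,
    integral_add (hga.restrict.const_mul _) (hgb.restrict.const_mul _),
    integral_const_mul, integral_const_mul]

theorem integral_prod_comp_snd_of_two_valued {Ω' : Type*} [MeasurableSpace Ω'] {ν : Measure Ω'}
    [SFinite ν] [IsFiniteMeasure μ] (hZ : Measurable Z) (hval : ∀ ω, Z ω = a ∨ Z ω = b)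
    (hab : a ≠ b) {G : ℤ → Ω' → ℝ} (ha : Integrable (G a) ν) (hb : Integrable (G b) ν) :
    ∫ w, G (Z w.2) w.1 ∂(ν.prod μ)
      = μ.real {ω | Z ω = a} * ∫ x, G a x ∂ν + μ.real {ω | Z ω = b} * ∫ x, G b x ∂ν := by
  have hsa : MeasurableSet {ω | Z ω = a} := measurableSet_eq_fun hZ measurable_const
  have hsb : MeasurableSet {ω | Z ω = b} := measurableSet_eq_fun hZ measurable_const
  have hsplit : (fun w : Ω' × Ω => G (Z w.2) w.1) = fun w =>
      G a w.1 * {ω | Z ω = a}.indicator 1 w.2 + G b w.1 * {ω | Z ω = b}.indicator 1 w.2 := by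
    funext w
    rcases hval w.2 with h | h <;> simp [h, hab, hab.symm]
  have hia : Integrable ({ω | Z ω = a}.indicator (1 : Ω → ℝ)) μ :=
    (integrable_const 1).indicator hsa
  have hib : Integrable ({ω | Z ω = b}.indicator (1 : Ω → ℝ)) μ :=
    (integrable_const 1).indicator hsb
  rw [hsplit, integral_add (ha.mul_prod hia) (hb.mul_prod hib),
    integral_prod_mul, integral_prod_mul, integral_indicator_one hsa, integral_indicator_one hsb,
    mul_comm, mul_comm (∫ x, G b x ∂ν)]

theorem measureReal_eq_one_sub_of_two_valued [IsProbabilityMeasure μ] (hZ : Measurable Z)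
    (hval : ∀ ω, Z ω = a ∨ Z ω = b) (hab : a ≠ b) :
    μ.real {ω | Z ω = b} = 1 - μ.real {ω | Z ω = a} := by
  have := measureReal_inter_add_inter_of_two_valued (μ := μ) hZ hval hab univ
  rw [univ_inter, univ_inter, probReal_univ] at this
  linarith

end TwoValued

/-- `noiseRate ep em y` is `e_y` and `noisyLabelProb p ep em y` is `p̃_y`; every label `y ≠ 1` is
read as `-1`. -/
def noiseRate (ep em : ℝ) (y : ℤ) : ℝ := if y = 1 then ep else em

def noisyLabelProb (p ep em : ℝ) (y : ℤ) : ℝ :=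
  if y = 1 then p * (1 - ep) + (1 - p) * em else (1 - p) * (1 - em) + p * ep

section LabelFunctions

variable {p ep em : ℝ}

@[simp] theorem noiseRate_one : noiseRate ep em 1 = ep := if_pos rfl

@[simp] theorem noiseRate_neg_one : noiseRate ep em (-1) = em := if_neg (by norm_num)

@[simp] theorem noisyLabelProb_one : noisyLabelProb p ep em 1 = p * (1 - ep) + (1 - p) * em :=
  if_pos rfl

@[simp] theorem noisyLabelProb_neg_one :
    noisyLabelProb p ep em (-1) = (1 - p) * (1 - em) + p * ep :=
  if_neg (by norm_num)

end LabelFunctions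

section NoisyLabels

variable {Ω : Type*} [MeasurableSpace Ω] {μ : Measure Ω} {Y Ytil : Ω → ℤ}

theorem integrable_labelComb (hY : Measurable Y) (hYval : ∀ ω, Y ω = 1 ∨ Y ω = -1)
    {g : ℤ → Ω → ℝ} (hg : ∀ y, Integrable (g y) μ) (c d : ℤ → ℝ) :
    Integrable (fun ω => c (Y ω) * g (Y ω) ω + d (Y ω) * g (-Y ω) ω) μ :=
  integrable_comp_of_two_valued hY hYval (by norm_num)
    (G := fun y ω => c y * g y ω + d y * g (-y) ω)
    (((hg _).const_mul _).add ((hg _).const_mul _)) (((hg _).const_mul _).add ((hg _).const_mul _))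

theorem measureReal_noisyLabel [IsProbabilityMeasure μ] (hY : Measurable Y)
    (hYt : Measurable Ytil) (hYval : ∀ ω, Y ω = 1 ∨ Y ω = -1)
    (hYtval : ∀ ω, Ytil ω = 1 ∨ Ytil ω = -1) {p ep em : ℝ} (hp : μ.real {ω | Y ω = 1} = p)
    (hep : μ.real ({ω | Ytil ω = -1} ∩ {ω | Y ω = 1}) = ep * μ.real {ω | Y ω = 1})
    (hem : μ.real ({ω | Ytil ω = 1} ∩ {ω | Y ω = -1}) = em * μ.real {ω | Y ω = -1}) :
    μ.real {ω | Ytil ω = 1} = noisyLabelProb p ep em 1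
      ∧ μ.real {ω | Ytil ω = -1} = noisyLabelProb p ep em (-1) := by
  have hYm := measureReal_eq_one_sub_of_two_valued (μ := μ) hY hYval (by norm_num)
  have hclass := measureReal_inter_add_inter_of_two_valued (μ := μ) hYt hYtval (by norm_num)
    {ω | Y ω = 1}
  have hmarg := measureReal_inter_add_inter_of_two_valued (μ := μ) hY hYval (by norm_num)
    {ω | Ytil ω = 1}
  have hone : μ.real {ω | Ytil ω = 1} = noisyLabelProb p ep em 1 := by
    rw [inter_comm, inter_comm {ω | Y ω = 1}, hep, hp] at hclass
    rw [hem, hYm, hp] at hmarg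
    rw [noisyLabelProb_one]
    linarith
  refine ⟨hone, ?_⟩
  rw [measureReal_eq_one_sub_of_two_valued hYt hYtval (by norm_num), hone, noisyLabelProb_one,
    noisyLabelProb_neg_one]
  ring

theorem integral_noisy_loss [IsFiniteMeasure μ] (hY : Measurable Y) (hYt : Measurable Ytil)
    (hYval : ∀ ω, Y ω = 1 ∨ Y ω = -1) (hYtval : ∀ ω, Ytil ω = 1 ∨ Ytil ω = -1)
    {g : ℤ → Ω → ℝ} (hg : ∀ y, Integrable (g y) μ) {ep em : ℝ}
    (hpos : μ.real {ω | Y ω = 1} ≠ 0) (hneg : μ.real {ω | Y ω = -1} ≠ 0)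
    (hep : μ.real ({ω | Ytil ω = -1} ∩ {ω | Y ω = 1}) = ep * μ.real {ω | Y ω = 1})
    (hem : μ.real ({ω | Ytil ω = 1} ∩ {ω | Y ω = -1}) = em * μ.real {ω | Y ω = -1})
    (hCI : ∀ y z, μ.real {ω | Y ω = y} * ∫ ω in {ω | Ytil ω = z} ∩ {ω | Y ω = y}, g z ω ∂μ
      = μ.real ({ω | Ytil ω = z} ∩ {ω | Y ω = y}) * ∫ ω in {ω | Y ω = y}, g z ω ∂μ) :
    ∫ ω, g (Ytil ω) ω ∂μ = ∫ ω, ((1 - noiseRate ep em (Y ω)) * g (Y ω) ω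
      + noiseRate ep em (Y ω) * g (-Y ω) ω) ∂μ := by
  have hint : Integrable (fun ω => g (Ytil ω) ω) μ :=
    integrable_comp_of_two_valued hYt hYtval (by norm_num) (hg 1) (hg (-1))
  rw [integral_comp_of_two_valued hY hYval (by norm_num) (G := fun _ ω => g (Ytil ω) ω) hint hint,
    integral_comp_of_two_valued hY hYval (by norm_num)
      (G := fun y ω => (1 - noiseRate ep em y) * g y ω + noiseRate ep em y * g (-y) ω)
      (((hg _).const_mul _).add ((hg _).const_mul _))
      (((hg _).const_mul _).add ((hg _).const_mul _))]
  simp only [noiseRate_one, noiseRate_neg_one, neg_neg]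
  congr 1
  · exact setIntegral_comp_of_condIndep hYt hYtval (by norm_num) (hg 1) (hg (-1)) hpos hep
      (hCI 1)
  · exact setIntegral_comp_of_condIndep hYt (fun ω => (hYtval ω).symm) (by norm_num)
      (hg (-1)) (hg 1) hneg hem (hCI (-1))

theorem integral_prod_comp_snd_eq_integral {Ω' : Type*} [MeasurableSpace Ω'] {ν : Measure Ω'}
    [SFinite ν] [IsProbabilityMeasure μ] (hYt : Measurable Ytil)
    (hYtval : ∀ ω, Ytil ω = 1 ∨ Ytil ω = -1) {Y' : Ω' → ℤ} (hY'val : ∀ x, Y' x = 1 ∨ Y' x = -1)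
    {G : ℤ → Ω' → ℝ} (hG : ∀ y, Integrable (G y) ν) {q : ℤ → ℝ}
    (hq : μ.real {ω | Ytil ω = 1} = q 1) (hq' : μ.real {ω | Ytil ω = -1} = q (-1)) :
    ∫ w, G (Ytil w.2) w.1 ∂(ν.prod μ)
      = ∫ x, (q (Y' x) * G (Y' x) x + (1 - q (Y' x)) * G (-Y' x) x) ∂ν := by
  have hsum : q 1 + q (-1) = 1 := by
    rw [← hq, ← hq', measureReal_eq_one_sub_of_two_valued hYt hYtval (by norm_num)]
    ring
  have hlabel : ∀ x, q (Y' x) * G (Y' x) x + (1 - q (Y' x)) * G (-Y' x) x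
      = q 1 * G 1 x + q (-1) * G (-1) x := by
    intro x
    rcases hY'val x with h | h <;> rw [h]
    · linear_combination (-G (-1) x) * hsum
    · rw [neg_neg]
      linear_combination (-G 1 x) * hsum
  simp_rw [hlabel]
  rw [integral_prod_comp_snd_of_two_valued hYt hYtval (by norm_num) (hG 1) (hG (-1)), hq, hq',
    integral_add ((hG 1).const_mul _) ((hG (-1)).const_mul _), integral_const_mul,
    integral_const_mul]

end NoisyLabels

theorem peer_loss_stmt13_general
    {Ω 𝒳 : Type*} [MeasurableSpace Ω]
    (μ : Measure Ω) [IsProbabilityMeasure μ]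
    (X : Ω → 𝒳) (Y Ytil : Ω → ℤ)
    (hmY : Measurable Y) (hmYt : Measurable Ytil)
    (hYval : ∀ ω, Y ω = 1 ∨ Y ω = -1)
    (hYtval : ∀ ω, Ytil ω = 1 ∨ Ytil ω = -1)
    (ep em : ℝ)
    (p : ℝ) (hp : (μ {ω | Y ω = 1}).toReal = p) (hp0 : 0 < p) (hp1 : p < 1)
    (hep : (μ {ω | Ytil ω = -1 ∧ Y ω = 1}).toReal = ep * (μ {ω | Y ω = 1}).toReal)
    (hem : (μ {ω | Ytil ω = 1 ∧ Y ω = -1}).toReal = em * (μ {ω | Y ω = -1}).toReal)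
    -- `Ỹ` is conditionally independent of `X` given `Y` (functional form)
    (hCI : ∀ (h : 𝒳 → ℝ), Integrable (fun ω => h (X ω)) μ → ∀ y y' : ℤ,
      (μ {ω | Y ω = y}).toReal * ∫ ω in {ω | Ytil ω = y' ∧ Y ω = y}, h (X ω) ∂μ
        = (μ {ω | Ytil ω = y' ∧ Y ω = y}).toReal * ∫ ω in {ω | Y ω = y}, h (X ω) ∂μ)
    (α : ℝ)
    (ℓ : ℝ → ℤ → ℝ) (f : 𝒳 → ℝ)
    (hInt : ∀ y : ℤ, Integrable (fun ω => ℓ (f (X ω)) y) μ) :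
    (∫ ω, ℓ (f (X ω)) (Ytil ω) ∂μ) - α * ∫ w, ℓ (f (X w.1)) (Ytil w.2) ∂(μ.prod μ)
      = ∫ ω,
          ((1 - (if Y ω = 1 then ep else em)
              - α * (if Y ω = 1 then p * (1 - ep) + (1 - p) * em
                     else (1 - p) * (1 - em) + p * ep)) * ℓ (f (X ω)) (Y ω)
            + ((if Y ω = 1 then ep else em)
                - α * (1 - (if Y ω = 1 then p * (1 - ep) + (1 - p) * em
                            else (1 - p) * (1 - em) + p * ep))) * ℓ (f (X ω)) (-Y ω)) ∂μ := by
  have hpos : μ.real {ω | Y ω = 1} = p := hp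
  have hneg : μ.real {ω | Y ω = -1} = 1 - p := by
    rw [measureReal_eq_one_sub_of_two_valued hmY hYval (by norm_num), hpos]
  obtain ⟨hq, hq'⟩ := measureReal_noisyLabel hmY hmYt hYval hYtval hp hep hem
  rw [integral_noisy_loss hmY hmYt hYval hYtval hInt (by rw [hpos]; exact hp0.ne')
      (by rw [hneg]; linarith) hep hem
      (fun y z => hCI (fun x => ℓ (f x) z) (hInt z) y z),
    integral_prod_comp_snd_eq_integral hmYt hYtval hYval hInt hq hq',
    ← integral_const_mul,
    ← integral_sub (integrable_labelComb hmY hYval hInt (1 - noiseRate ep em ·) (noiseRate ep em))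
      ((integrable_labelComb hmY hYval hInt (noisyLabelProb p ep em)
        (1 - noisyLabelProb p ep em ·)).const_mul α)]
  congr 1 with ω
  simp only [noiseRate, noisyLabelProb]
  ring

/-- With `p̃₊₁ = p(1-ep) + (1-p)em` and `p̃₋₁ = (1-p)(1-em) + p·ep` the
noisy-label marginals, for every classifier `f`, loss `ℓ` and `α ≥ 0`:
`E[ℓ_α-peer(f(X), Ỹ)] = E_D[(1 - e_Y - α p̃_Y) ℓ(f(X), Y) + (e_Y - α (1 - p̃_Y)) ℓ(f(X), -Y)]`. -/
theorem peer_loss_stmt13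
    {Ω 𝒳 : Type*} [MeasurableSpace Ω] [MeasurableSpace 𝒳]
    (μ : Measure Ω) [IsProbabilityMeasure μ]
    (X : Ω → 𝒳) (Y Ytil : Ω → ℤ)
    (hmX : Measurable X) (hmY : Measurable Y) (hmYt : Measurable Ytil)
    (hYval : ∀ ω, Y ω = 1 ∨ Y ω = -1)
    (hYtval : ∀ ω, Ytil ω = 1 ∨ Ytil ω = -1)
    (ep em : ℝ)
    (p : ℝ) (hp : (μ {ω | Y ω = 1}).toReal = p) (hp0 : 0 < p) (hp1 : p < 1)
    (hep : (μ {ω | Ytil ω = -1 ∧ Y ω = 1}).toReal = ep * (μ {ω | Y ω = 1}).toReal)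
    (hem : (μ {ω | Ytil ω = 1 ∧ Y ω = -1}).toReal = em * (μ {ω | Y ω = -1}).toReal)
    -- `Ỹ` is conditionally independent of `X` given `Y` (functional form)
    (hCI : ∀ (h : 𝒳 → ℝ), Integrable (fun ω => h (X ω)) μ → ∀ y y' : ℤ,
      (μ {ω | Y ω = y}).toReal * ∫ ω in {ω | Ytil ω = y' ∧ Y ω = y}, h (X ω) ∂μ
        = (μ {ω | Ytil ω = y' ∧ Y ω = y}).toReal * ∫ ω in {ω | Y ω = y}, h (X ω) ∂μ)
    (α : ℝ) (hα0 : 0 ≤ α)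
    (ℓ : ℝ → ℤ → ℝ) (f : 𝒳 → ℝ) (hmf : Measurable f)
    (hInt : ∀ y : ℤ, Integrable (fun ω => ℓ (f (X ω)) y) μ) :
    (∫ ω, ℓ (f (X ω)) (Ytil ω) ∂μ) - α * ∫ w, ℓ (f (X w.1)) (Ytil w.2) ∂(μ.prod μ)
      = ∫ ω,
          ((1 - (if Y ω = 1 then ep else em)
              - α * (if Y ω = 1 then p * (1 - ep) + (1 - p) * em
                     else (1 - p) * (1 - em) + p * ep)) * ℓ (f (X ω)) (Y ω)
            + ((if Y ω = 1 then ep else em)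
                - α * (1 - (if Y ω = 1 then p * (1 - ep) + (1 - p) * em
                            else (1 - p) * (1 - em) + p * ep))) * ℓ (f (X ω)) (-Y ω)) ∂μ :=
  peer_loss_stmt13_general μ X Y Ytil hmY hmYt hYval hYtval ep em p hp hp0 hp1 hep hem hCI α ℓ f
    hInt
end

section
/- In the K-class setting with uniform off-diagonal flipping q_{ij} = e_j (j ≠ i), for any classifier f : 𝒳 → {1,…,K}: E[𝟙(f(X) ≠ Ỹ)] − E[𝟙(f(X_{n₁}) ≠ Ỹ_{n₂})] = (1 − Σ_{k=1}^K e_k)·(E[𝟙(f(X) ≠ Y)] − E[𝟙(f(X_{n₁}) ≠ Y_{n₂})]), where (X_{n₁}, Y_{n₁}, Ỹ_{n₁}) and (X_{n₂}, Y_{n₂}, Ỹ_{n₂}) are two independent draws from the joint distribution. In particular, when the label distribution is balanced, P(Y = j) = 1/K for all j, the second (clean) peer term equals 1/K minus the accuracy, so minimizing the multi-class 0-1 peer loss on the noisy distribution is equivalent (when Σ_k e_k < 1) to minimizing the clean 0-1 risk. -/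
/-!
Write `S = ∑ₖ e k`, `r j = P(f X = j)` and `p j = P(Y = j)`. Uniform flipping makes the
transition matrix `Q = (1 - S) • 1 + 1 eᵀ`, so conditional independence of `Ỹ` and `X` given `Y`
yields `P(f X = Ỹ) = ∑ⱼ e j r j + (1 - S) P(f X = Y)` and `P(Ỹ = j) = e j + (1 - S) p j`.
Because the peer samples are independent, the noisy peer agreement is
`∑ⱼ r j P(Ỹ = j) = ∑ⱼ e j r j + (1 - S) ∑ⱼ r j p j`. A peer loss is peer agreement minus
agreement, so the `e`-terms cancel and the factor `1 - S` remains. For balanced labels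
`∑ⱼ r j p j = 1 / K`, hence the clean peer loss is `1 / K` minus the accuracy.
-/

open MeasureTheory

section FiniteValued

variable {Ω Ω' ι : Type*} [MeasurableSpace Ω] [MeasurableSpace Ω'] [Fintype ι]
  [MeasurableSpace ι] [MeasurableSingletonClass ι]

lemma measureReal_eq_sum_inter_fiber (μ : Measure Ω) [IsFiniteMeasure μ] {Z : Ω → ι}
    (hZ : Measurable Z) {S : Set Ω} (hS : MeasurableSet S) :
    μ.real S = ∑ j, μ.real (S ∩ {ω | Z ω = j}) := by
  conv_lhs => rw [show S = ⋃ j, S ∩ {ω | Z ω = j} by ext; simp]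
  refine measureReal_iUnion_fintype (fun i j hij => ?_)
    fun j => hS.inter (hZ (measurableSet_singleton j))
  exact Set.disjoint_left.2 fun ω hi hj => hij (hi.2.symm.trans hj.2)

lemma sum_probReal_fiber (μ : Measure Ω) [IsProbabilityMeasure μ] {Z : Ω → ι}
    (hZ : Measurable Z) : ∑ j, μ.real {ω | Z ω = j} = 1 := by
  simpa using (measureReal_eq_sum_inter_fiber μ hZ MeasurableSet.univ).symm

lemma measureReal_eq_fun_eq_sum (μ : Measure Ω) [IsFiniteMeasure μ] {F Z : Ω → ι}
    (hF : Measurable F) (hZ : Measurable Z) :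
    μ.real {ω | F ω = Z ω} = ∑ j, μ.real {ω | F ω = j ∧ Z ω = j} := by
  rw [measureReal_eq_sum_inter_fiber μ hZ (measurableSet_eq_fun hF hZ)]
  congr! 2 with j
  ext ω
  simp only [Set.mem_inter_iff]
  exact ⟨fun h => ⟨h.1.trans h.2, h.2⟩, fun h => ⟨h.1.trans h.2.symm, h.2⟩⟩

lemma measureReal_prod_fst_eq_snd (μ : Measure Ω) (ν : Measure Ω') [IsFiniteMeasure μ]
    [IsFiniteMeasure ν] {F : Ω → ι} {W : Ω' → ι} (hF : Measurable F) (hW : Measurable W) :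
    (μ.prod ν).real {w | F w.1 = W w.2}
      = ∑ j, μ.real {ω | F ω = j} * ν.real {ω | W ω = j} := by
  rw [measureReal_eq_fun_eq_sum (μ.prod ν) (F := fun w => F w.1) (Z := fun w => W w.2)
    (hF.comp measurable_fst) (hW.comp measurable_snd)]
  congr! 1 with j
  change (μ.prod ν).real ({ω | F ω = j} ×ˢ {ω | W ω = j}) = _
  simp only [measureReal_def, Measure.prod_prod, ENNReal.toReal_mul]

lemma probReal_ne_eq_one_sub (μ : Measure Ω) [IsProbabilityMeasure μ] {F W : Ω → ι}
    (hF : Measurable F) (hW : Measurable W) :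
    μ.real {ω | F ω ≠ W ω} = 1 - μ.real {ω | F ω = W ω} :=
  probReal_compl_eq_one_sub (measurableSet_eq_fun hF hW)

lemma probReal_ne_sub_prod_ne (μ : Measure Ω) [IsProbabilityMeasure μ] {F W : Ω → ι}
    (hF : Measurable F) (hW : Measurable W) :
    μ.real {ω | F ω ≠ W ω} - (μ.prod μ).real {w | F w.1 ≠ W w.2}
      = (μ.prod μ).real {w | F w.1 = W w.2} - μ.real {ω | F ω = W ω} := by
  rw [probReal_ne_eq_one_sub μ hF hW, probReal_ne_eq_one_sub (μ.prod μ)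
    (F := fun w => F w.1) (W := fun w => W w.2) (hF.comp measurable_fst) (hW.comp measurable_snd)]
  ring

lemma peer_loss_sub_eq_of_balanced (μ : Measure Ω) [IsProbabilityMeasure μ]
    {F Y : Ω → ι} (hF : Measurable F) (hY : Measurable Y) {c : ℝ}
    (hbal : ∀ j, μ.real {ω | Y ω = j} = c) :
    μ.real {ω | F ω ≠ Y ω} - (μ.prod μ).real {w | F w.1 ≠ Y w.2}
      = c - μ.real {ω | F ω = Y ω} := by
  rw [probReal_ne_sub_prod_ne μ hF hY, measureReal_prod_fst_eq_snd μ μ hF hY]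
  simp_rw [hbal, ← Finset.sum_mul, sum_probReal_fiber μ hF, one_mul]

end FiniteValued

section NoisyLabels

variable {Ω 𝒳 ι : Type*} [MeasurableSpace Ω] {μ : Measure Ω} {X : Ω → 𝒳} {Y Ytil : Ω → ι}

lemma measureReal_feature_noisy_label_eq [IsFiniteMeasure μ] {Q : ι → ι → ℝ}
    (hQ : ∀ i j, μ.real {ω | Ytil ω = j ∧ Y ω = i} = Q i j * μ.real {ω | Y ω = i})
    (hCI : ∀ (A : Set 𝒳) (i j : ι),
      μ.real {ω | Y ω = i} * μ.real {ω | X ω ∈ A ∧ Ytil ω = j ∧ Y ω = i}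
        = μ.real {ω | X ω ∈ A ∧ Y ω = i} * μ.real {ω | Ytil ω = j ∧ Y ω = i})
    (A : Set 𝒳) (i j : ι) :
    μ.real {ω | X ω ∈ A ∧ Ytil ω = j ∧ Y ω = i} = Q i j * μ.real {ω | X ω ∈ A ∧ Y ω = i} := by
  by_cases hp : μ.real {ω | Y ω = i} = 0
  · have h_null {S : Set Ω} (hS : S ⊆ {ω | Y ω = i}) : μ.real S = 0 :=
      le_antisymm (hp ▸ measureReal_mono hS) measureReal_nonneg
    rw [h_null fun ω h => h.2.2, h_null fun ω h => h.2, mul_zero]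
  · apply mul_left_cancel₀ hp
    rw [hCI, hQ]
    ring

variable [Fintype ι] [MeasurableSpace ι] [MeasurableSingletonClass ι]

lemma measureReal_noisy_label_eq_sum [IsFiniteMeasure μ] (hmY : Measurable Y)
    (hmYt : Measurable Ytil) {Q : ι → ι → ℝ}
    (hQ : ∀ i j, μ.real {ω | Ytil ω = j ∧ Y ω = i} = Q i j * μ.real {ω | Y ω = i}) (j : ι) :
    μ.real {ω | Ytil ω = j} = ∑ i, Q i j * μ.real {ω | Y ω = i} := by
  rw [measureReal_eq_sum_inter_fiber μ hmY (S := {ω | Ytil ω = j})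
    (hmYt (measurableSet_singleton j))]
  exact Finset.sum_congr rfl fun i _ => hQ i j

lemma measureReal_eq_noisy_label_eq_sum [IsFiniteMeasure μ] [MeasurableSpace 𝒳]
    (hmX : Measurable X) (hmY : Measurable Y) (hmYt : Measurable Ytil) {Q : ι → ι → ℝ}
    (hXQ : ∀ (A : Set 𝒳) (i j : ι),
      μ.real {ω | X ω ∈ A ∧ Ytil ω = j ∧ Y ω = i} = Q i j * μ.real {ω | X ω ∈ A ∧ Y ω = i})
    {f : 𝒳 → ι} (hf : Measurable f) :
    μ.real {ω | f (X ω) = Ytil ω} = ∑ j, ∑ i, Q i j * μ.real {ω | f (X ω) = j ∧ Y ω = i} := by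
  rw [measureReal_eq_fun_eq_sum μ (F := fun ω => f (X ω)) (hf.comp hmX) hmYt]
  refine Finset.sum_congr rfl fun j _ => ?_
  have hmeas : MeasurableSet {ω | f (X ω) = j ∧ Ytil ω = j} :=
    (hf.comp hmX (measurableSet_singleton j)).inter (hmYt (measurableSet_singleton j))
  rw [measureReal_eq_sum_inter_fiber μ hmY hmeas]
  refine Finset.sum_congr rfl fun i _ => ?_
  have hset : {ω | f (X ω) = j ∧ Ytil ω = j} ∩ {ω | Y ω = i}
      = {ω | X ω ∈ {x | f x = j} ∧ Ytil ω = j ∧ Y ω = i} := by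
    ext
    simp [and_assoc]
  rw [hset]
  exact hXQ _ i j

end NoisyLabels

section UniformFlip

variable {ι : Type*} [Fintype ι] [DecidableEq ι]

/-- The paper's noise transition matrix `Q`: `Q i j = e j` for `j ≠ i`, rows summing to one. -/
def uniformFlip (e : ι → ℝ) (i j : ι) : ℝ := e j + if i = j then 1 - ∑ k, e k else 0

lemma sum_uniformFlip_mul (e v : ι → ℝ) (j : ι) :
    ∑ i, uniformFlip e i j * v i = e j * ∑ i, v i + (1 - ∑ k, e k) * v j := by
  simp [uniformFlip, add_mul, Finset.sum_add_distrib, Finset.mul_sum, ite_mul]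

variable {Ω 𝒳 : Type*} [MeasurableSpace Ω]
  {μ : Measure Ω} {X : Ω → 𝒳} {Y Ytil : Ω → ι} {e : ι → ℝ}

lemma measureReal_noisy_label_eq_uniformFlip
    (hoff : ∀ i j, i ≠ j → μ.real {ω | Ytil ω = j ∧ Y ω = i} = e j * μ.real {ω | Y ω = i})
    (hdiag : ∀ i, μ.real {ω | Ytil ω = i ∧ Y ω = i}
      = (1 - ∑ j ∈ Finset.univ.erase i, e j) * μ.real {ω | Y ω = i})
    (i j : ι) :
    μ.real {ω | Ytil ω = j ∧ Y ω = i} = uniformFlip e i j * μ.real {ω | Y ω = i} := by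
  obtain rfl | hij := eq_or_ne i j
  · rw [hdiag, uniformFlip, if_pos rfl, Finset.sum_erase_eq_sub (Finset.mem_univ _)]
    ring
  · rw [hoff i j hij, uniformFlip, if_neg hij, add_zero]

variable [MeasurableSpace ι] [MeasurableSingletonClass ι] [IsProbabilityMeasure μ]
  [MeasurableSpace 𝒳]

theorem noisy_peer_loss_sub_eq (hmX : Measurable X) (hmY : Measurable Y)
    (hmYt : Measurable Ytil)
    (hoff : ∀ i j, i ≠ j → μ.real {ω | Ytil ω = j ∧ Y ω = i} = e j * μ.real {ω | Y ω = i})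
    (hdiag : ∀ i, μ.real {ω | Ytil ω = i ∧ Y ω = i}
      = (1 - ∑ j ∈ Finset.univ.erase i, e j) * μ.real {ω | Y ω = i})
    (hCI : ∀ (A : Set 𝒳) (i j : ι),
      μ.real {ω | Y ω = i} * μ.real {ω | X ω ∈ A ∧ Ytil ω = j ∧ Y ω = i}
        = μ.real {ω | X ω ∈ A ∧ Y ω = i} * μ.real {ω | Ytil ω = j ∧ Y ω = i})
    {f : 𝒳 → ι} (hf : Measurable f) :
    μ.real {ω | f (X ω) ≠ Ytil ω} - (μ.prod μ).real {w | f (X w.1) ≠ Ytil w.2}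
      = (1 - ∑ k, e k) *
          (μ.real {ω | f (X ω) ≠ Y ω} - (μ.prod μ).real {w | f (X w.1) ≠ Y w.2}) := by
  have hmfX : Measurable fun ω => f (X ω) := hf.comp hmX
  have hQ := measureReal_noisy_label_eq_uniformFlip hoff hdiag
  have hXQ := measureReal_feature_noisy_label_eq hQ hCI
  have hnoisy_acc : μ.real {ω | f (X ω) = Ytil ω}
      = ∑ j, e j * μ.real {ω | f (X ω) = j} + (1 - ∑ k, e k) * μ.real {ω | f (X ω) = Y ω} := by
    rw [measureReal_eq_noisy_label_eq_sum hmX hmY hmYt hXQ hf,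
      measureReal_eq_fun_eq_sum μ hmfX hmY]
    simp_rw [sum_uniformFlip_mul, Finset.sum_add_distrib, ← Finset.mul_sum]
    congr! 3 with j
    exact (measureReal_eq_sum_inter_fiber μ hmY (hmfX (measurableSet_singleton j))).symm
  have hnoisy_marginal (j : ι) :
      μ.real {ω | Ytil ω = j} = e j + (1 - ∑ k, e k) * μ.real {ω | Y ω = j} := by
    rw [measureReal_noisy_label_eq_sum hmY hmYt hQ, sum_uniformFlip_mul,
      sum_probReal_fiber μ hmY, mul_one]
  rw [probReal_ne_sub_prod_ne μ hmfX hmYt, probReal_ne_sub_prod_ne μ hmfX hmY,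
    measureReal_prod_fst_eq_snd μ μ hmfX hmYt, measureReal_prod_fst_eq_snd μ μ hmfX hmY,
    hnoisy_acc]
  simp_rw [hnoisy_marginal, mul_add, Finset.sum_add_distrib, mul_left_comm _ (1 - ∑ k, e k),
    ← Finset.mul_sum, mul_comm (e _)]
  ring

end UniformFlip

theorem peer_loss_stmt19_general
    {Ω 𝒳 : Type*} [MeasurableSpace Ω] [MeasurableSpace 𝒳]
    (μ : Measure Ω) [IsProbabilityMeasure μ]
    {K : ℕ}
    (X : Ω → 𝒳) (Y Ytil : Ω → Fin K)
    (hmX : Measurable X) (hmY : Measurable Y) (hmYt : Measurable Ytil)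
    (e : Fin K → ℝ)
    (hoff : ∀ i j : Fin K, i ≠ j →
      (μ {ω | Ytil ω = j ∧ Y ω = i}).toReal = e j * (μ {ω | Y ω = i}).toReal)
    (hdiag : ∀ i : Fin K,
      (μ {ω | Ytil ω = i ∧ Y ω = i}).toReal
        = (1 - ∑ j ∈ Finset.univ.erase i, e j) * (μ {ω | Y ω = i}).toReal)
    -- `Ỹ` is conditionally independent of `X` given `Y`
    (hCI : ∀ (A : Set 𝒳) (i j : Fin K),
      (μ {ω | Y ω = i}).toReal * (μ {ω | X ω ∈ A ∧ Ytil ω = j ∧ Y ω = i}).toReal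
        = (μ {ω | X ω ∈ A ∧ Y ω = i}).toReal * (μ {ω | Ytil ω = j ∧ Y ω = i}).toReal) :
    (∀ f : 𝒳 → Fin K, Measurable f →
      (μ {ω | f (X ω) ≠ Ytil ω}).toReal - ((μ.prod μ) {w | f (X w.1) ≠ Ytil w.2}).toReal
        = (1 - ∑ k : Fin K, e k) *
            ((μ {ω | f (X ω) ≠ Y ω}).toReal - ((μ.prod μ) {w | f (X w.1) ≠ Y w.2}).toReal))
    ∧ ((∀ j : Fin K, (μ {ω | Y ω = j}).toReal = 1 / (K : ℝ)) →
        ∀ f : 𝒳 → Fin K, Measurable f →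
          (μ {ω | f (X ω) ≠ Y ω}).toReal - ((μ.prod μ) {w | f (X w.1) ≠ Y w.2}).toReal
            = 1 / (K : ℝ) - (μ {ω | f (X ω) = Y ω}).toReal)
    ∧ ((∀ j : Fin K, (μ {ω | Y ω = j}).toReal = 1 / (K : ℝ)) →
        (∑ k : Fin K, e k) < 1 →
        ∀ f g : 𝒳 → Fin K, Measurable f → Measurable g →
          ((μ {ω | f (X ω) ≠ Ytil ω}).toReal
              - ((μ.prod μ) {w | f (X w.1) ≠ Ytil w.2}).toReal
            ≤ (μ {ω | g (X ω) ≠ Ytil ω}).toReal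
              - ((μ.prod μ) {w | g (X w.1) ≠ Ytil w.2}).toReal
          ↔ (μ {ω | f (X ω) ≠ Y ω}).toReal ≤ (μ {ω | g (X ω) ≠ Y ω}).toReal)) := by
  simp only [← measureReal_def] at hoff hdiag hCI ⊢
  have hmf {f : 𝒳 → Fin K} (hf : Measurable f) : Measurable fun ω => f (X ω) := hf.comp hmX
  have noisy {f : 𝒳 → Fin K} (hf : Measurable f) :=
    noisy_peer_loss_sub_eq hmX hmY hmYt hoff hdiag hCI hf
  have clean {f : 𝒳 → Fin K} (hf : Measurable f) (hbal : ∀ j, μ.real {ω | Y ω = j} = 1 / K) :=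
    peer_loss_sub_eq_of_balanced μ (hmf hf) hmY hbal
  refine ⟨fun f hf => noisy hf, fun hbal f hf => clean hf hbal, fun hbal hS f g hf hg => ?_⟩
  rw [noisy hf, noisy hg, mul_le_mul_iff_right₀ (sub_pos.2 hS), clean hf hbal, clean hg hbal,
    sub_le_sub_iff_left, probReal_ne_eq_one_sub μ (hmf hf) hmY,
    probReal_ne_eq_one_sub μ (hmf hg) hmY, sub_le_sub_iff_left]

/-- **multi-class peer loss.**  In the `K`-class setting with uniform
off-diagonal flipping, the noisy expected 0-1 peer risk is `(1 - ∑ₖ e k)` times the clean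
expected 0-1 peer risk; when the label distribution is balanced the clean peer risk is
`1/K` minus the accuracy, so (when `∑ₖ e k < 1`) minimizing the noisy 0-1 peer risk is
equivalent to minimizing the clean 0-1 risk. -/
theorem peer_loss_stmt19
    {Ω 𝒳 : Type*} [MeasurableSpace Ω] [MeasurableSpace 𝒳]
    (μ : Measure Ω) [IsProbabilityMeasure μ]
    {K : ℕ} (hK : 0 < K)
    (X : Ω → 𝒳) (Y Ytil : Ω → Fin K)
    (hmX : Measurable X) (hmY : Measurable Y) (hmYt : Measurable Ytil)
    (e : Fin K → ℝ) (he0 : ∀ j, 0 ≤ e j)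
    (hoff : ∀ i j : Fin K, i ≠ j →
      (μ {ω | Ytil ω = j ∧ Y ω = i}).toReal = e j * (μ {ω | Y ω = i}).toReal)
    (hdiag : ∀ i : Fin K,
      (μ {ω | Ytil ω = i ∧ Y ω = i}).toReal
        = (1 - ∑ j ∈ Finset.univ.erase i, e j) * (μ {ω | Y ω = i}).toReal)
    -- `Ỹ` is conditionally independent of `X` given `Y`
    (hCI : ∀ (A : Set 𝒳) (i j : Fin K),
      (μ {ω | Y ω = i}).toReal * (μ {ω | X ω ∈ A ∧ Ytil ω = j ∧ Y ω = i}).toReal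
        = (μ {ω | X ω ∈ A ∧ Y ω = i}).toReal * (μ {ω | Ytil ω = j ∧ Y ω = i}).toReal) :
    (∀ f : 𝒳 → Fin K, Measurable f →
      (μ {ω | f (X ω) ≠ Ytil ω}).toReal - ((μ.prod μ) {w | f (X w.1) ≠ Ytil w.2}).toReal
        = (1 - ∑ k : Fin K, e k) *
            ((μ {ω | f (X ω) ≠ Y ω}).toReal - ((μ.prod μ) {w | f (X w.1) ≠ Y w.2}).toReal))
    ∧ ((∀ j : Fin K, (μ {ω | Y ω = j}).toReal = 1 / (K : ℝ)) →
        ∀ f : 𝒳 → Fin K, Measurable f →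
          (μ {ω | f (X ω) ≠ Y ω}).toReal - ((μ.prod μ) {w | f (X w.1) ≠ Y w.2}).toReal
            = 1 / (K : ℝ) - (μ {ω | f (X ω) = Y ω}).toReal)
    ∧ ((∀ j : Fin K, (μ {ω | Y ω = j}).toReal = 1 / (K : ℝ)) →
        (∑ k : Fin K, e k) < 1 →
        ∀ f g : 𝒳 → Fin K, Measurable f → Measurable g →
          ((μ {ω | f (X ω) ≠ Ytil ω}).toReal
              - ((μ.prod μ) {w | f (X w.1) ≠ Ytil w.2}).toReal
            ≤ (μ {ω | g (X ω) ≠ Ytil ω}).toReal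
              - ((μ.prod μ) {w | g (X w.1) ≠ Ytil w.2}).toReal
          ↔ (μ {ω | f (X ω) ≠ Y ω}).toReal ≤ (μ {ω | g (X ω) ≠ Y ω}).toReal)) :=
  peer_loss_stmt19_general μ X Y Ytil hmX hmY hmYt e hoff hdiag hCI
end
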